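/- arXiv:q-alg/9705021 — 10 statements merged into one kernel-verified Lean document; each statement's English description precedes it below -/
import Mathlib

section
/- The map T satisfies the pentagon equation T₂₃ ∘ T₁₃ ∘ T₁₂ = T₁₂ ∘ T₂₃ as maps P × P × P → P × P × P; equivalently, for all x, y, z ∈ P the following three identities hold: (x•y)•z = x•(y•z), (x*y)•((x•y)*z) = x*(y•z), and (x*y)*((x•y)*z) = y*z. -/
/-- The classical "dot" operation of the decorated flip:
`x • y := (x₁ y₁, x₁ y₂ + x₂)`. -/
noncomputable def Pdot (x y : ℝ × ℝ) : ℝ × ℝ :=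
  (x.1 * y.1, x.1 * y.2 + x.2)

/-- The classical "star" operation of the decorated flip:
`x * y := (y₁ x₂ / (x₁ y₂ + x₂), y₂ / (x₁ y₂ + x₂))`. -/
noncomputable def Pstar (x y : ℝ × ℝ) : ℝ × ℝ :=
  (y.1 * x.2 / (x.1 * y.2 + x.2), y.2 / (x.1 * y.2 + x.2))

/-- Membership in `P := ℝ_{>0} × ℝ_{>0}`. -/
def Ppos (x : ℝ × ℝ) : Prop := 0 < x.1 ∧ 0 < x.2

/-- The Ptolemy transformation `T(x,y) := (x•y, x*y)` acting on the factors 1,2 of `P×P×P`. -/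
noncomputable def T12 (p : (ℝ × ℝ) × (ℝ × ℝ) × (ℝ × ℝ)) : (ℝ × ℝ) × (ℝ × ℝ) × (ℝ × ℝ) :=
  (Pdot p.1 p.2.1, Pstar p.1 p.2.1, p.2.2)

/-- The Ptolemy transformation acting on the factors 1,3 of `P×P×P`. -/
noncomputable def T13 (p : (ℝ × ℝ) × (ℝ × ℝ) × (ℝ × ℝ)) : (ℝ × ℝ) × (ℝ × ℝ) × (ℝ × ℝ) :=
  (Pdot p.1 p.2.2, p.2.1, Pstar p.1 p.2.2)

/-- The Ptolemy transformation acting on the factors 2,3 of `P×P×P`. -/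
noncomputable def T23 (p : (ℝ × ℝ) × (ℝ × ℝ) × (ℝ × ℝ)) : (ℝ × ℝ) × (ℝ × ℝ) × (ℝ × ℝ) :=
  (p.1, Pdot p.2.1 p.2.2, Pstar p.2.1 p.2.2)

/-- Pentagon equation for the classical Ptolemy transformation `T(x,y) = (x•y, x*y)`:
`T₂₃ ∘ T₁₃ ∘ T₁₂ = T₁₂ ∘ T₂₃` on `P × P × P`, equivalently the three componentwise
identities `(x•y)•z = x•(y•z)`, `(x*y)•((x•y)*z) = x*(y•z)`, `(x*y)*((x•y)*z) = y*z`. -/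
theorem pentagon_classical (x y z : ℝ × ℝ) (hx : Ppos x) (hy : Ppos y) (hz : Ppos z) :
    T23 (T13 (T12 (x, y, z))) = T12 (T23 (x, y, z)) ∧
    Pdot (Pdot x y) z = Pdot x (Pdot y z) ∧
    Pdot (Pstar x y) (Pstar (Pdot x y) z) = Pstar x (Pdot y z) ∧
    Pstar (Pstar x y) (Pstar (Pdot x y) z) = Pstar y z := by

  obtain ⟨hx1, hx2⟩ := hx
  obtain ⟨hy1, hy2⟩ := hy
  obtain ⟨hz1, hz2⟩ := hz
  have h1 : x.1 * y.2 + x.2 > 0 := by positivity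
  have h2 : y.1 * z.2 + y.2 > 0 := by positivity
  have h3 : x.1 * y.1 * z.2 + (x.1 * y.2 + x.2) > 0 := by positivity
  have h4 : x.1 * (y.1 * z.2 + y.2) + x.2 = x.1 * y.1 * z.2 + (x.1 * y.2 + x.2) := by ring
  have key : Pdot (Pdot x y) z = Pdot x (Pdot y z) ∧
      Pdot (Pstar x y) (Pstar (Pdot x y) z) = Pstar x (Pdot y z) ∧
      Pstar (Pstar x y) (Pstar (Pdot x y) z) = Pstar y z := by
    refine ⟨?_, ?_, ?_⟩ <;>
      simp only [Pdot, Pstar, Prod.mk.injEq] <;>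
      constructor <;>
      first
        | (field_simp; ring)
        | ring
  refine ⟨?_, key⟩
  simp only [T12, T13, T23, Prod.mk.injEq]
  exact ⟨key.1, key.2.1, key.2.2⟩
end

section
/- The map T : P × P → P × P, T(x,y) := (x•y, x*y), is a bijection; explicitly, its inverse is given by T⁻¹(X,Y) = ((X₁/(Y₁ + X₁Y₂), X₂Y₁/(Y₁ + X₁Y₂)), (Y₁ + X₁Y₂, X₂Y₂)) for X = (X₁,X₂), Y = (Y₁,Y₂) ∈ P. -/
/-- `P × P`, where `P := ℝ_{>0} × ℝ_{>0}`, as a subset of `(ℝ × ℝ) × (ℝ × ℝ)`. -/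
def PP : Set ((ℝ × ℝ) × (ℝ × ℝ)) :=
  {p | 0 < p.1.1 ∧ 0 < p.1.2 ∧ 0 < p.2.1 ∧ 0 < p.2.2}

/-- The classical Ptolemy transformation `T(x,y) := (x•y, x*y)`. -/
noncomputable def Tmap (p : (ℝ × ℝ) × (ℝ × ℝ)) : (ℝ × ℝ) × (ℝ × ℝ) :=
  (Pdot p.1 p.2, Pstar p.1 p.2)

/-- The explicit inverse of the Ptolemy transformation:
`T⁻¹(X,Y) = ((X₁/(Y₁+X₁Y₂), X₂Y₁/(Y₁+X₁Y₂)), (Y₁+X₁Y₂, X₂Y₂))`. -/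
noncomputable def Tinv (p : (ℝ × ℝ) × (ℝ × ℝ)) : (ℝ × ℝ) × (ℝ × ℝ) :=
  ((p.1.1 / (p.2.1 + p.1.1 * p.2.2), p.1.2 * p.2.1 / (p.2.1 + p.1.1 * p.2.2)),
   (p.2.1 + p.1.1 * p.2.2, p.1.2 * p.2.2))

lemma Tmap_mapsTo : Set.MapsTo Tmap PP PP := by
  rintro ⟨⟨a,b⟩,⟨c,d⟩⟩ ⟨ha,hb,hc,hd⟩
  have h : 0 < a*d+b := by positivity
  simp only [Tmap, Pdot, Pstar, PP, Set.mem_setOf_eq]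
  exact ⟨by positivity, by positivity, by positivity, by positivity⟩

lemma Tinv_mapsTo : Set.MapsTo Tinv PP PP := by
  rintro ⟨⟨a,b⟩,⟨c,d⟩⟩ ⟨ha,hb,hc,hd⟩
  have h : 0 < c + a*d := by positivity
  simp only [Tinv, PP, Set.mem_setOf_eq]
  exact ⟨by positivity, by positivity, by positivity, by positivity⟩

lemma Tinv_Tmap : ∀ p ∈ PP, Tinv (Tmap p) = p := by
  rintro ⟨⟨a,b⟩,⟨c,d⟩⟩ ⟨ha,hb,hc,hd⟩
  have h : a*d+b ≠ 0 := by positivity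
  simp only [Tmap, Tinv, Pdot, Pstar, Prod.mk.injEq]
  refine ⟨⟨?_,?_⟩,?_,?_⟩ <;> field_simp <;> ring

lemma Tmap_Tinv : ∀ p ∈ PP, Tmap (Tinv p) = p := by
  rintro ⟨⟨a,b⟩,⟨c,d⟩⟩ ⟨ha,hb,hc,hd⟩
  have h : c + a*d ≠ 0 := by positivity
  simp only [Tmap, Tinv, Pdot, Pstar, Prod.mk.injEq]
  refine ⟨⟨?_,?_⟩,?_,?_⟩ <;> field_simp <;> ring

/-- The Ptolemy transformation `T : P × P → P × P` is a bijection, with the explicit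
inverse `T⁻¹(X,Y) = ((X₁/(Y₁+X₁Y₂), X₂Y₁/(Y₁+X₁Y₂)), (Y₁+X₁Y₂, X₂Y₂))`. -/
theorem ptolemy_bijective :
    Set.BijOn Tmap PP PP ∧
    Set.MapsTo Tinv PP PP ∧
    (∀ p ∈ PP, Tinv (Tmap p) = p) ∧
    (∀ p ∈ PP, Tmap (Tinv p) = p) := by
  refine ⟨⟨Tmap_mapsTo, ?_, ?_⟩, Tinv_mapsTo, Tinv_Tmap, Tmap_Tinv⟩
  · intro p hp q hq h
    rw [← Tinv_Tmap p hp, ← Tinv_Tmap q hq, h]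
  · intro p hp
    exact ⟨Tinv p, Tinv_mapsTo hp, Tmap_Tinv p hp⟩
end

section
/- The map F is smooth and is a symplectomorphism of (ℝ⁴, Ω): for every p ∈ ℝ⁴ and all w, w' ∈ ℝ⁴ one has Ω(DF_p(w), DF_p(w')) = Ω(w, w'), where DF_p is the derivative of F at p. This expresses that the decorated elementary move preserves the canonical two-form β = d log x₁ ∧ d log x₂ + d log y₁ ∧ d log y₂. -/
open Real

/-- The decorated elementary move in logarithmic coordinates:
`F(u₁,u₂,v₁,v₂) := (u₁+v₁, s, v₁+u₂−s, v₂−s)` with `s := log(exp(u₁+v₂)+exp(u₂))`. -/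
noncomputable def Fmap (p : Fin 4 → ℝ) : Fin 4 → ℝ :=
  ![p 0 + p 2,
    Real.log (Real.exp (p 0 + p 3) + Real.exp (p 1)),
    p 2 + p 1 - Real.log (Real.exp (p 0 + p 3) + Real.exp (p 1)),
    p 3 - Real.log (Real.exp (p 0 + p 3) + Real.exp (p 1))]

/-- The standard symplectic bilinear form on `ℝ⁴`:
`Ω(a,b) = a₁b₂ − a₂b₁ + a₃b₄ − a₄b₃`. -/
noncomputable def Omega (a b : Fin 4 → ℝ) : ℝ :=
  a 0 * b 1 - a 1 * b 0 + a 2 * b 3 - a 3 * b 2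

noncomputable def Pr (i : Fin 4) : (Fin 4 → ℝ) →L[ℝ] ℝ :=
  ContinuousLinearMap.proj i

noncomputable def Ls (p : Fin 4 → ℝ) : (Fin 4 → ℝ) →L[ℝ] ℝ :=
  (Real.exp (p 0 + p 3) + Real.exp (p 1))⁻¹ •
    (Real.exp (p 0 + p 3) • (Pr 0 + Pr 3) + Real.exp (p 1) • Pr 1)

noncomputable def Lmap (p : Fin 4 → ℝ) : (Fin 4 → ℝ) →L[ℝ] (Fin 4 → ℝ) :=
  ContinuousLinearMap.pi ![Pr 0 + Pr 2, Ls p, Pr 2 + Pr 1 - Ls p, Pr 3 - Ls p]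

lemma hasFDerivAt_s (p : Fin 4 → ℝ) :
    HasFDerivAt (fun q : Fin 4 → ℝ => Real.log (Real.exp (q 0 + q 3) + Real.exp (q 1)))
      (Ls p) p := by
  have h03 : HasFDerivAt (fun q : Fin 4 → ℝ => q 0 + q 3) (Pr 0 + Pr 3) p :=
    (hasFDerivAt_apply 0 p).add (hasFDerivAt_apply 3 p)
  have h1 : HasFDerivAt (fun q : Fin 4 → ℝ => q 1) (Pr 1) p := hasFDerivAt_apply 1 p
  have hg : HasFDerivAt (fun q : Fin 4 → ℝ => Real.exp (q 0 + q 3) + Real.exp (q 1))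
      (Real.exp (p 0 + p 3) • (Pr 0 + Pr 3) + Real.exp (p 1) • Pr 1) p :=
    (h03.exp).add (h1.exp)
  have hne : Real.exp (p 0 + p 3) + Real.exp (p 1) ≠ 0 := by positivity
  exact hg.log hne

lemma hasFDerivAt_Fmap (p : Fin 4 → ℝ) : HasFDerivAt Fmap (Lmap p) p := by
  apply hasFDerivAt_pi''
  intro i
  have hs := hasFDerivAt_s p
  have h0 : HasFDerivAt (fun q : Fin 4 → ℝ => q 0) (Pr 0) p := hasFDerivAt_apply 0 p
  have h1 : HasFDerivAt (fun q : Fin 4 → ℝ => q 1) (Pr 1) p := hasFDerivAt_apply 1 p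
  have h2 : HasFDerivAt (fun q : Fin 4 → ℝ => q 2) (Pr 2) p := hasFDerivAt_apply 2 p
  have h3 : HasFDerivAt (fun q : Fin 4 → ℝ => q 3) (Pr 3) p := hasFDerivAt_apply 3 p
  have hproj : ∀ i, (ContinuousLinearMap.proj i).comp (Lmap p)
      = (![Pr 0 + Pr 2, Ls p, Pr 2 + Pr 1 - Ls p, Pr 3 - Ls p] : Fin 4 → _) i := by
    intro i
    ext w
    simp [Lmap, ContinuousLinearMap.proj_pi]
  fin_cases i <;> rw [hproj] <;> simp only [Fmap, Matrix.cons_val_zero, Matrix.cons_val_one,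
    Matrix.head_cons, Matrix.cons_val_two, Matrix.tail_cons, Matrix.cons_val_three]
  · exact h0.add h2
  · exact hs
  · exact (h2.add h1).sub hs
  · exact h3.sub hs

/-- The decorated elementary move, read in logarithmic coordinates, is a smooth
symplectomorphism of `(ℝ⁴, Ω)`: it is `C^∞` and its derivative at every point preserves
the standard symplectic form `Ω`, i.e. it preserves
`β = d log x₁ ∧ d log x₂ + d log y₁ ∧ d log y₂`. -/
theorem flip_symplectomorphism :
    ContDiff ℝ (⊤ : ℕ∞) Fmap ∧
    ∀ (p w w' : Fin 4 → ℝ),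
      Omega (fderiv ℝ Fmap p w) (fderiv ℝ Fmap p w') = Omega w w' := by
  have hs : ContDiff ℝ (⊤ : ℕ∞) (fun q : Fin 4 → ℝ =>
      Real.log (Real.exp (q 0 + q 3) + Real.exp (q 1))) := by
    apply ContDiff.log
    · exact (((contDiff_apply ℝ ℝ 0).add (contDiff_apply ℝ ℝ 3)).exp).add
        ((contDiff_apply ℝ ℝ 1).exp)
    · intro x; positivity
  constructor
  · rw [contDiff_pi]
    intro i
    fin_cases i <;> simp only [Fmap, Matrix.cons_val_zero, Matrix.cons_val_one,
      Matrix.head_cons, Matrix.cons_val_two, Matrix.tail_cons, Matrix.cons_val_three]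
    · exact (contDiff_apply ℝ ℝ 0).add (contDiff_apply ℝ ℝ 2)
    · exact hs
    · exact ((contDiff_apply ℝ ℝ 2).add (contDiff_apply ℝ ℝ 1)).sub hs
    · exact (contDiff_apply ℝ ℝ 3).sub hs
  · intro p w w'
    rw [(hasFDerivAt_Fmap p).fderiv]
    have hS : Real.exp (p 0 + p 3) + Real.exp (p 1) ≠ 0 := by positivity
    simp only [Omega, Lmap, Ls, Pr, ContinuousLinearMap.pi_apply, Matrix.cons_val_zero,
      Matrix.cons_val_one, Matrix.head_cons, Matrix.cons_val_two, Matrix.tail_cons,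
      Matrix.cons_val_three, ContinuousLinearMap.add_apply, ContinuousLinearMap.sub_apply,
      ContinuousLinearMap.smul_apply, ContinuousLinearMap.proj_apply, smul_eq_mul]
    field_simp
    ring
end

section
/- Let (x₁,x₂) and (y₁,y₂) be commuting q-Weyl pairs in A with x₁y₂ + x₂ invertible. Then x•y and x*y are again q-Weyl pairs, i.e. all four components (x•y)₁, (x•y)₂, (x*y)₁, (x*y)₂ are invertible, (x•y)₁(x•y)₂ = q²(x•y)₂(x•y)₁, and (x*y)₁(x*y)₂ = q²(x*y)₂(x*y)₁; moreover the two pairs commute componentwise: (x•y)_i (x*y)_j = (x*y)_j (x•y)_i for all i, j ∈ {1,2}. Hence the quantum decorated flip defines an algebra homomorphism. -/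
/-- The quantum "dot" operation: `x • y := (x₁y₁, x₁y₂ + x₂)`. -/
def Qdot {A : Type*} [Ring A] (x y : A × A) : A × A :=
  (x.1 * y.1, x.1 * y.2 + x.2)

/-- The quantum "star" operation:
`x * y := (y₁x₂(x₁y₂+x₂)⁻¹, y₂(x₁y₂+x₂)⁻¹)`, the inverse taken via `Ring.inverse`. -/
noncomputable def Qstar {A : Type*} [Ring A] (x y : A × A) : A × A :=
  (y.1 * x.2 * Ring.inverse (x.1 * y.2 + x.2), y.2 * Ring.inverse (x.1 * y.2 + x.2))

/-- A `q`-Weyl pair: both components are invertible and `a₁a₂ = q²a₂a₁`. -/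
def IsWeylPair {A : Type*} [Ring A] (q : A) (a : A × A) : Prop :=
  IsUnit a.1 ∧ IsUnit a.2 ∧ a.1 * a.2 = q ^ 2 * (a.2 * a.1)

/-- Two pairs commute componentwise. -/
def PairCommute {A : Type*} [Ring A] (x y : A × A) : Prop :=
  ∀ i j : Fin 2, Commute (if i = 0 then x.1 else x.2) (if j = 0 then y.1 else y.2)


/-! Put `p = q²`, `D = x₁y₂ + x₂`, `u = x₁y₁`, `v = y₁x₂`. Then `u` `p`-commutes with both
summands of `D`, while `y₂` and `v` commute with `D` (for `v` the factors `p` coming from the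
relations of `x` and of `y` cancel), hence with `D⁻¹`; and `D⁻¹u = p·uD⁻¹`. All the claimed
relations are products of these. -/

open scoped Ring

section

variable {A : Type*} [Ring A] {p a b c d : A}

theorem pairCommute_iff {x y : A × A} :
    PairCommute x y ↔
      Commute x.1 y.1 ∧ Commute x.1 y.2 ∧ Commute x.2 y.1 ∧ Commute x.2 y.2 := by
  refine ⟨fun h => ⟨h 0 0, h 0 1, h 1 0, h 1 1⟩, ?_⟩
  rintro ⟨h11, h12, h21, h22⟩ i j
  fin_cases i <;> fin_cases j <;> assumption

theorem Commute.ringInverse_right (h : Commute a b) : Commute a b⁻¹ʳ := by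
  by_cases hb : IsUnit b
  · obtain ⟨u, rfl⟩ := hb
    rw [Ring.inverse_unit]
    exact h.units_inv_right
  · rw [Ring.inverse_non_unit b hb]
    exact Commute.zero_right a

def QCommute (p a b : A) : Prop :=
  a * b = p * (b * a)

namespace QCommute

theorem add_right (hb : QCommute p a b) (hc : QCommute p a c) : QCommute p a (b + c) := by
  rw [QCommute, mul_add, hb, hc, add_mul, mul_add]

theorem mul_commute_left (h : QCommute p a b) (hc : Commute c b) : QCommute p (a * c) b := by
  rw [QCommute, mul_assoc, hc.eq, ← mul_assoc, h, mul_assoc, mul_assoc]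

theorem commute_mul_left (ha : Commute a b) (h : QCommute p c b) (hp : Commute p a) :
    QCommute p (a * c) b :=
  calc a * c * b = a * (p * (b * c)) := by rw [mul_assoc, h]
    _ = p * (a * b * c) := by rw [← mul_assoc, ← hp.eq]; simp only [mul_assoc]
    _ = p * (b * (a * c)) := by rw [ha.eq]; simp only [mul_assoc]

theorem commute_mul_right (hc : Commute a c) (h : QCommute p a b) (hp : Commute p c) :
    QCommute p a (c * b) :=
  calc a * (c * b) = c * (a * b) := by rw [← mul_assoc, hc.eq, mul_assoc]
    _ = p * (c * b * a) := by rw [h, ← mul_assoc, ← hp.eq]; simp only [mul_assoc]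

theorem mul_mul_of_commute (h : QCommute p a b) (ha : Commute a c) (hb : Commute b c) :
    QCommute p (a * c) (b * c) :=
  calc a * c * (b * c) = a * b * (c * c) := by
        rw [mul_assoc a, ← mul_assoc c, ← hb.eq]; simp only [mul_assoc]
    _ = p * (b * a * (c * c)) := by rw [h]; simp only [mul_assoc]
    _ = p * (b * c * (a * c)) := by
        rw [mul_assoc b c, ← mul_assoc c a, ← ha.eq]; simp only [mul_assoc]

/-- The factor `p` picked up by moving `a` past `b` is given back by moving `c` past `a`. -/
theorem commute_mul (hb : QCommute p a b) (hc : QCommute p c a) (hp : Commute p b) :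
    Commute a (b * c) :=
  calc a * (b * c) = p * (b * (a * c)) := by rw [← mul_assoc, hb]; simp only [mul_assoc]
    _ = b * (c * a) := by rw [hc, ← mul_assoc b p, ← hp.eq, mul_assoc]
    _ = b * c * a := (mul_assoc b c a).symm

theorem ringInverse_left (h : QCommute p a b) (hp : Commute p b⁻¹ʳ) : QCommute p b⁻¹ʳ a := by
  by_cases hb : IsUnit b
  · calc b⁻¹ʳ * a = b⁻¹ʳ * (a * b * b⁻¹ʳ) := by rw [Ring.mul_inverse_cancel_right b a hb]
      _ = b⁻¹ʳ * (p * (b * a)) * b⁻¹ʳ := by rw [h]; simp only [mul_assoc]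
      _ = p * (b⁻¹ʳ * b * a * b⁻¹ʳ) := by rw [← mul_assoc b⁻¹ʳ p, ← hp.eq]; simp only [mul_assoc]
      _ = p * (a * b⁻¹ʳ) := by rw [Ring.inverse_mul_cancel b hb, one_mul]
  · simp [QCommute, Ring.inverse_non_unit b hb]

end QCommute

theorem qcommute_mul_mul_add (hab : QCommute p a b) (hcd : QCommute p c d) (hac : Commute a c)
    (had : Commute a d) (hbc : Commute b c) (hpa : Commute p a) :
    QCommute p (a * c) (a * d + b) :=
  have hcad : QCommute p c (a * d) := .commute_mul_right hac.symm hcd hpa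
  (QCommute.commute_mul_left ((Commute.refl a).mul_right had) hcad hpa).add_right
    (hab.mul_commute_left hbc.symm)

theorem commute_mul_mul_add (hp : ∀ r, Commute p r) (hab : QCommute p a b)
    (hcd : QCommute p c d) (hac : Commute a c) (hbc : Commute b c) (hbd : Commute b d) :
    Commute (c * b) (a * d + b) := by
  refine Commute.add_right ?_ (hbc.symm.mul_left (Commute.refl b))
  calc c * b * (a * d) = c * (b * a) * d := by simp only [mul_assoc]
    _ = b * a * (c * d) := by rw [(hbc.symm.mul_right hac.symm).eq]; simp only [mul_assoc]
    _ = a * b * (d * c) := by rw [hcd, hab, ← mul_assoc, (hp _).eq]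
    _ = a * d * (c * b) := by rw [mul_assoc, (hbd.mul_right hbc).eq]; simp only [mul_assoc]

end

theorem quantum_flip_preserves_weyl_pairs_general {A : Type*} [Ring A] (q : A)
    (hqc : ∀ a : A, Commute q a)
    (x y : A × A) (hx : IsWeylPair q x) (hy : IsWeylPair q y)
    (hxy : PairCommute x y) (hD : IsUnit (x.1 * y.2 + x.2)) :
    IsWeylPair q (Qdot x y) ∧ IsWeylPair q (Qstar x y) ∧
    PairCommute (Qdot x y) (Qstar x y) := by
  obtain ⟨a, b⟩ := x
  obtain ⟨c, d⟩ := y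
  obtain ⟨ha, hb, hab⟩ : IsUnit a ∧ IsUnit b ∧ QCommute (q ^ 2) a b := hx
  obtain ⟨hc, hd, hcd⟩ : IsUnit c ∧ IsUnit d ∧ QCommute (q ^ 2) c d := hy
  obtain ⟨hac, had, hbc, hbd⟩ := pairCommute_iff.1 hxy
  have hp : ∀ r, Commute (q ^ 2) r := fun r => (hqc r).pow_left 2
  have hdD : Commute d (a * d + b) := (had.symm.mul_right (Commute.refl d)).add_right hbd.symm
  have hvD : Commute (c * b) (a * d + b) := commute_mul_mul_add hp hab hcd hac hbc hbd
  have huD : QCommute (q ^ 2) (a * c) (a * d + b) :=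
    qcommute_mul_mul_add hab hcd hac had hbc (hp a)
  have hEu : QCommute (q ^ 2) (a * d + b)⁻¹ʳ (a * c) := huD.ringInverse_left (hp _)
  have huv : QCommute (q ^ 2) (a * c) (c * b) :=
    (QCommute.commute_mul_right hac hab (hp c)).mul_commute_left
      ((Commute.refl c).mul_right hbc.symm)
  have hud : QCommute (q ^ 2) (a * c) d := .commute_mul_left had hcd (hp a)
  refine ⟨⟨ha.mul hc, hD, huD⟩, ⟨(hc.mul hb).mul hD.ringInverse, hd.mul hD.ringInverse, ?_⟩,
    pairCommute_iff.2 ⟨huv.commute_mul hEu (hp _), hud.commute_mul hEu (hp _),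
      hvD.symm.mul_right (Commute.refl _).ringInverse_right,
      hdD.symm.mul_right (Commute.refl _).ringInverse_right⟩⟩
  exact (hcd.mul_commute_left hbd).mul_mul_of_commute hvD.ringInverse_right hdD.ringInverse_right

/-- If `x`, `y` are commuting `q`-Weyl pairs (with `q` a central invertible element) and
`x₁y₂ + x₂` is invertible, then `x•y` and `x*y` are again `q`-Weyl pairs and they commute
componentwise; hence the quantum decorated flip defines an algebra homomorphism. -/
theorem quantum_flip_preserves_weyl_pairs {A : Type*} [Ring A] (q : A)
    (hq : IsUnit q) (hqc : ∀ a : A, Commute q a)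
    (x y : A × A) (hx : IsWeylPair q x) (hy : IsWeylPair q y)
    (hxy : PairCommute x y) (hD : IsUnit (x.1 * y.2 + x.2)) :
    IsWeylPair q (Qdot x y) ∧ IsWeylPair q (Qstar x y) ∧
    PairCommute (Qdot x y) (Qstar x y) :=
  quantum_flip_preserves_weyl_pairs_general q hqc x y hx hy hxy hD
end

section
/- Let (x₁,x₂), (y₁,y₂), (z₁,z₂) be pairwise commuting q-Weyl pairs in A, and assume the elements D := x₁y₂ + x₂, E := y₁z₂ + y₂, F := x₁y₁z₂ + x₁y₂ + x₂, and G := x₁y₂ + x₂y₁z₂ + x₂y₂ are invertible. Then the quantum pentagon identities hold: (x•y)•z = x•(y•z), (x*y)•((x•y)*z) = x*(y•z), and (x*y)*((x•y)*z) = y*z (equalities of pairs, componentwise in A). -/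
private lemma qp_comm_inv {A : Type*} [Ring A] {a b : A} (h : Commute a b) (hb : IsUnit b) :
    Commute a (Ring.inverse b) := by
  have hmain : b * (a * Ring.inverse b) = a := by
    rw [← mul_assoc, ← h.eq, mul_assoc, Ring.mul_inverse_cancel b hb, mul_one]
  show a * Ring.inverse b = Ring.inverse b * a
  conv_rhs => rw [← hmain]
  rw [Ring.inverse_mul_cancel_left b _ hb]

private lemma qp_inv_conj {A : Type*} [Ring A] {q2 X Dv : A} (hc : ∀ t : A, Commute q2 t)
    (hU : IsUnit Dv) (h : X * Dv = q2 * (Dv * X)) :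
    Ring.inverse Dv * X = q2 * (X * Ring.inverse Dv) := by
  calc Ring.inverse Dv * X
      = Ring.inverse Dv * X * Dv * Ring.inverse Dv := (Ring.mul_inverse_cancel_right Dv _ hU).symm
    _ = Ring.inverse Dv * (X * Dv) * Ring.inverse Dv := by rw [mul_assoc (Ring.inverse Dv) X Dv]
    _ = Ring.inverse Dv * (q2 * (Dv * X)) * Ring.inverse Dv := by rw [h]
    _ = q2 * (Ring.inverse Dv * (Dv * X)) * Ring.inverse Dv := by
        rw [← mul_assoc, ← mul_assoc, ← (hc (Ring.inverse Dv)).eq]; simp only [mul_assoc]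
    _ = q2 * X * Ring.inverse Dv := by rw [Ring.inverse_mul_cancel_left Dv _ hU]
    _ = q2 * (X * Ring.inverse Dv) := by rw [mul_assoc]

private lemma qp_sw {A : Type*} [Ring A] {x y : A} (h : Commute x y) (w : A) :
    x * (y * w) = y * (x * w) := by rw [← mul_assoc, h.eq, mul_assoc]

private lemma qp_swq {A : Type*} [Ring A] {x y q2 : A} (h : x * y = q2 * (y * x)) (w : A) :
    x * (y * w) = q2 * (y * (x * w)) := by rw [← mul_assoc, h, mul_assoc, mul_assoc]

/-- The quantum pentagon identities: for pairwise commuting `q`-Weyl pairs `x,y,z`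
(with `q` central and invertible), assuming `D = x₁y₂+x₂`, `E = y₁z₂+y₂`,
`F = x₁y₁z₂+x₁y₂+x₂` and `G = x₁y₂+x₂y₁z₂+x₂y₂` are invertible, one has
`(x•y)•z = x•(y•z)`, `(x*y)•((x•y)*z) = x*(y•z)` and `(x*y)*((x•y)*z) = y*z`. -/
theorem quantum_pentagon {A : Type*} [Ring A] (q : A)
    (hq : IsUnit q) (hqc : ∀ a : A, Commute q a)
    (x y z : A × A)
    (hx : IsWeylPair q x) (hy : IsWeylPair q y) (hz : IsWeylPair q z)
    (hxy : PairCommute x y) (hxz : PairCommute x z) (hyz : PairCommute y z)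
    (hD : IsUnit (x.1 * y.2 + x.2))
    (hE : IsUnit (y.1 * z.2 + y.2))
    (hF : IsUnit (x.1 * y.1 * z.2 + x.1 * y.2 + x.2))
    (hG : IsUnit (x.1 * y.2 + x.2 * y.1 * z.2 + x.2 * y.2)) :
    Qdot (Qdot x y) z = Qdot x (Qdot y z) ∧
    Qdot (Qstar x y) (Qstar (Qdot x y) z) = Qstar x (Qdot y z) ∧
    Qstar (Qstar x y) (Qstar (Qdot x y) z) = Qstar y z := by
  obtain ⟨a, b⟩ := x
  obtain ⟨c, d⟩ := y
  obtain ⟨e, f⟩ := z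
  simp only [IsWeylPair] at hx hy hz
  obtain ⟨hua, hub, hwx⟩ := hx
  obtain ⟨huc, hud, hwy⟩ := hy
  obtain ⟨hue, huf, hwz⟩ := hz
  have hac : Commute a c := by simpa using hxy 0 0
  have had : Commute a d := by simpa using hxy 0 1
  have hbc : Commute b c := by simpa using hxy 1 0
  have hbd : Commute b d := by simpa using hxy 1 1
  have hae : Commute a e := by simpa using hxz 0 0
  have haf : Commute a f := by simpa using hxz 0 1
  have hbe : Commute b e := by simpa using hxz 1 0
  have hbf : Commute b f := by simpa using hxz 1 1
  have hce : Commute c e := by simpa using hyz 0 0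
  have hcf : Commute c f := by simpa using hyz 0 1
  have hde : Commute d e := by simpa using hyz 1 0
  have hdf : Commute d f := by simpa using hyz 1 1
  have hq2 : ∀ t : A, Commute (q ^ 2) t := fun t => (hqc t).pow_left 2
  have hDu : IsUnit (a * d + b) := by simpa using hD
  have hEu : IsUnit (c * f + d) := by simpa using hE
  have hFu : IsUnit (a * c * f + (a * d + b)) := by
    rw [← add_assoc]; simpa using hF
  -- commutation with D
  have hdD : Commute d (a * d + b) := (had.symm.mul_right (Commute.refl d)).add_right hbd.symm
  have heD : Commute e (a * d + b) := (hae.symm.mul_right hde.symm).add_right hbe.symm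
  have hfD : Commute f (a * d + b) := (haf.symm.mul_right hdf.symm).add_right hbf.symm
  -- (a*c) q²-semiconjugates D
  have hi : (a * c) * (a * d + b) = q ^ 2 * ((a * d + b) * (a * c)) := by
    simp only [mul_add, add_mul, mul_assoc, hwx, hwy, hwz, had.eq, haf.eq, hcf.eq,
      hbc.symm.eq, hac.symm.eq, hbe.symm.eq, hde.symm.eq, hae.symm.eq, hce.symm.eq,
      hbd.symm.eq, hbf.symm.eq, hdf.symm.eq,
      qp_swq hwx, qp_swq hwy, qp_swq hwz, qp_sw had, qp_sw haf, qp_sw hcf,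
      qp_sw hbc.symm, qp_sw hac.symm, qp_sw hbe.symm, qp_sw hde.symm, qp_sw hae.symm,
      qp_sw hce.symm, qp_sw hbd.symm, qp_sw hbf.symm, qp_sw hdf.symm,
      (hq2 a).symm.eq, (hq2 b).symm.eq, (hq2 c).symm.eq, (hq2 d).symm.eq,
      (hq2 e).symm.eq, (hq2 f).symm.eq,
      qp_sw (hq2 a).symm, qp_sw (hq2 b).symm, qp_sw (hq2 c).symm, qp_sw (hq2 d).symm,
      qp_sw (hq2 e).symm, qp_sw (hq2 f).symm]
  -- unfold the operations
  simp only [Qdot, Qstar, Prod.mk.injEq]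
  -- normalize the denominator of the RHS of the 2nd identity
  have hFalt : a * (c * f + d) + b = a * c * f + (a * d + b) := by noncomm_ring
  rw [hFalt]
  set D := a * d + b with hDdef
  set E := c * f + d with hEdef
  set F := a * c * f + D with hFdef
  set iD := Ring.inverse D with hiDdef
  set iE := Ring.inverse E with hiEdef
  set iF := Ring.inverse F with hiFdef
  have hiDD : iD * D = 1 := by rw [hiDdef]; exact Ring.inverse_mul_cancel D hDu
  have hDiD : D * iD = 1 := by rw [hiDdef]; exact Ring.mul_inverse_cancel D hDu
  have hiEE : iE * E = 1 := by rw [hiEdef]; exact Ring.inverse_mul_cancel E hEu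
  have hEiE : E * iE = 1 := by rw [hiEdef]; exact Ring.mul_inverse_cancel E hEu
  have hiFF : iF * F = 1 := by rw [hiFdef]; exact Ring.inverse_mul_cancel F hFu
  have hFiF : F * iF = 1 := by rw [hiFdef]; exact Ring.mul_inverse_cancel F hFu
  have heiD : Commute e iD := hiDdef ▸ qp_comm_inv heD hDu
  have hfiD : Commute f iD := hiDdef ▸ qp_comm_inv hfD hDu
  have hdiD : Commute d iD := hiDdef ▸ qp_comm_inv hdD hDu
  have hiconj : iD * (a * c) = q ^ 2 * ((a * c) * iD) := by
    rw [hiDdef]; exact qp_inv_conj hq2 hDu hi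
  -- claim A : d iD (acf) = (a(c(df))) iD
  have hA : d * iD * (a * c * f) = a * (c * (d * f)) * iD := by
    calc d * iD * (a * c * f) = d * (iD * (a * c)) * f := by noncomm_ring
      _ = d * (q ^ 2 * ((a * c) * iD)) * f := by rw [hiconj]
      _ = d * (q ^ 2 * ((a * c) * (iD * f))) := by noncomm_ring
      _ = d * (q ^ 2 * ((a * c) * (f * iD))) := by rw [hfiD.symm.eq]
      _ = (d * (q ^ 2 * ((a * c) * f))) * iD := by noncomm_ring
      _ = a * (c * (d * f)) * iD := by
          rw [show d * (q ^ 2 * ((a * c) * f)) = a * (c * (d * f)) from by simp only [mul_add, add_mul, mul_assoc, hwx, hwy, hwz, had.eq, haf.eq, hcf.eq,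
      hbc.symm.eq, hac.symm.eq, hbe.symm.eq, hde.symm.eq, hae.symm.eq, hce.symm.eq,
      hbd.symm.eq, hbf.symm.eq, hdf.symm.eq,
      qp_swq hwx, qp_swq hwy, qp_swq hwz, qp_sw had, qp_sw haf, qp_sw hcf,
      qp_sw hbc.symm, qp_sw hac.symm, qp_sw hbe.symm, qp_sw hde.symm, qp_sw hae.symm,
      qp_sw hce.symm, qp_sw hbd.symm, qp_sw hbf.symm, qp_sw hdf.symm,
      (hq2 a).symm.eq, (hq2 b).symm.eq, (hq2 c).symm.eq, (hq2 d).symm.eq,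
      (hq2 e).symm.eq, (hq2 f).symm.eq,
      qp_sw (hq2 a).symm, qp_sw (hq2 b).symm, qp_sw (hq2 c).symm, qp_sw (hq2 d).symm,
      qp_sw (hq2 e).symm, qp_sw (hq2 f).symm]]
  -- claim A2 : d iD F = a(c(df)) iD + d
  have hA2 : d * iD * F = a * (c * (d * f)) * iD + d := by
    calc d * iD * F = d * iD * (a * c * f) + d * (iD * D) := by rw [hFdef]; noncomm_ring
      _ = a * (c * (d * f)) * iD + d := by rw [hA, hiDD, mul_one]
  -- claim C : d iD commutes with F
  have hC : d * iD * F = F * (d * iD) := by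
    rw [hA2]
    calc a * (c * (d * f)) * iD + d
        = (a * c * f) * d * iD + d := by
          rw [show (a * c * f) * d = a * (c * (d * f)) from by simp only [mul_add, add_mul, mul_assoc, hwx, hwy, hwz, had.eq, haf.eq, hcf.eq,
      hbc.symm.eq, hac.symm.eq, hbe.symm.eq, hde.symm.eq, hae.symm.eq, hce.symm.eq,
      hbd.symm.eq, hbf.symm.eq, hdf.symm.eq,
      qp_swq hwx, qp_swq hwy, qp_swq hwz, qp_sw had, qp_sw haf, qp_sw hcf,
      qp_sw hbc.symm, qp_sw hac.symm, qp_sw hbe.symm, qp_sw hde.symm, qp_sw hae.symm,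
      qp_sw hce.symm, qp_sw hbd.symm, qp_sw hbf.symm, qp_sw hdf.symm,
      (hq2 a).symm.eq, (hq2 b).symm.eq, (hq2 c).symm.eq, (hq2 d).symm.eq,
      (hq2 e).symm.eq, (hq2 f).symm.eq,
      qp_sw (hq2 a).symm, qp_sw (hq2 b).symm, qp_sw (hq2 c).symm, qp_sw (hq2 d).symm,
      qp_sw (hq2 e).symm, qp_sw (hq2 f).symm]]
      _ = (a * c * f) * (d * iD) + (d * D) * iD := by
          rw [show (d * D) * iD = d * (D * iD) from by noncomm_ring, hDiD, mul_one]
          noncomm_ring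
      _ = (a * c * f) * (d * iD) + (D * d) * iD := by rw [hdD.eq]
      _ = F * (d * iD) := by rw [hFdef]; noncomm_ring
  -- key identity : the new denominator equals E * iF
  have hSmulF : (c * b * iD * (f * iF) + d * iD) * F = E := by
    have ht1 : c * b * iD * (f * iF) * F = c * (b * f) * iD := by
      calc c * b * iD * (f * iF) * F = (c * b * (iD * f)) * (iF * F) := by noncomm_ring
        _ = (c * b * (f * iD)) * 1 := by rw [hiFF, hfiD.symm.eq]
        _ = c * (b * f) * iD := by noncomm_ring
    calc (c * b * iD * (f * iF) + d * iD) * F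
        = c * b * iD * (f * iF) * F + d * iD * F := by noncomm_ring
      _ = c * (b * f) * iD + (a * (c * (d * f)) * iD + d) := by rw [ht1, hA2]
      _ = (c * (b * f) + a * (c * (d * f))) * iD + d := by noncomm_ring
      _ = ((c * f) * D) * iD + d := by
          have h5 : c * (b * f) + a * (c * (d * f)) = (c * f) * D := by
            rw [hDdef]
            simp only [mul_add, add_mul, mul_assoc, hwx, hwy, hwz, had.eq, haf.eq, hcf.eq,
      hbc.symm.eq, hac.symm.eq, hbe.symm.eq, hde.symm.eq, hae.symm.eq, hce.symm.eq,
      hbd.symm.eq, hbf.symm.eq, hdf.symm.eq,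
      qp_swq hwx, qp_swq hwy, qp_swq hwz, qp_sw had, qp_sw haf, qp_sw hcf,
      qp_sw hbc.symm, qp_sw hac.symm, qp_sw hbe.symm, qp_sw hde.symm, qp_sw hae.symm,
      qp_sw hce.symm, qp_sw hbd.symm, qp_sw hbf.symm, qp_sw hdf.symm,
      (hq2 a).symm.eq, (hq2 b).symm.eq, (hq2 c).symm.eq, (hq2 d).symm.eq,
      (hq2 e).symm.eq, (hq2 f).symm.eq,
      qp_sw (hq2 a).symm, qp_sw (hq2 b).symm, qp_sw (hq2 c).symm, qp_sw (hq2 d).symm,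
      qp_sw (hq2 e).symm, qp_sw (hq2 f).symm]
            abel
          rw [h5]
      _ = E := by
          rw [show ((c * f) * D) * iD = (c * f) * (D * iD) from by noncomm_ring, hDiD,
            mul_one, hEdef]
  have hS : c * b * iD * (f * iF) + d * iD = E * iF := by
    calc c * b * iD * (f * iF) + d * iD
        = ((c * b * iD * (f * iF) + d * iD) * F) * iF := by
          rw [hiFdef]; exact (Ring.mul_inverse_cancel_right F _ hFu).symm
      _ = E * iF := by rw [hSmulF]
  -- inverse of E * iF
  have hEFu1 : (E * iF) * (F * iE) = 1 := by
    calc (E * iF) * (F * iE) = E * ((iF * F) * iE) := by noncomm_ring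
      _ = 1 := by rw [hiFF, one_mul, hEiE]
  have hEFu2 : (F * iE) * (E * iF) = 1 := by
    calc (F * iE) * (E * iF) = F * ((iE * E) * iF) := by noncomm_ring
      _ = 1 := by rw [hiEE, one_mul, hFiF]
  have hinvEF : Ring.inverse (E * iF) = F * iE := by
    exact Ring.inverse_unit ⟨E * iF, F * iE, hEFu1, hEFu2⟩
  have hinvM : Ring.inverse (c * b * iD * (f * iF) + d * iD) = F * iE := by
    rw [hS, hinvEF]
  refine ⟨?_, ⟨?_, ?_⟩, ?_, ?_⟩
  · constructor <;> noncomm_ring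
  · -- G2.1
    calc c * b * iD * (e * D * iF) = (c * b) * ((iD * e) * (D * iF)) := by noncomm_ring
      _ = (c * b) * ((e * iD) * (D * iF)) := by rw [← heiD.eq]
      _ = (c * (b * e)) * ((iD * D) * iF) := by noncomm_ring
      _ = (c * (b * e)) * iF := by rw [hiDD, one_mul]
      _ = c * e * b * iF := by
          rw [show c * (b * e) = c * e * b from by simp only [mul_add, add_mul, mul_assoc, hwx, hwy, hwz, had.eq, haf.eq, hcf.eq,
      hbc.symm.eq, hac.symm.eq, hbe.symm.eq, hde.symm.eq, hae.symm.eq, hce.symm.eq,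
      hbd.symm.eq, hbf.symm.eq, hdf.symm.eq,
      qp_swq hwx, qp_swq hwy, qp_swq hwz, qp_sw had, qp_sw haf, qp_sw hcf,
      qp_sw hbc.symm, qp_sw hac.symm, qp_sw hbe.symm, qp_sw hde.symm, qp_sw hae.symm,
      qp_sw hce.symm, qp_sw hbd.symm, qp_sw hbf.symm, qp_sw hdf.symm,
      (hq2 a).symm.eq, (hq2 b).symm.eq, (hq2 c).symm.eq, (hq2 d).symm.eq,
      (hq2 e).symm.eq, (hq2 f).symm.eq,
      qp_sw (hq2 a).symm, qp_sw (hq2 b).symm, qp_sw (hq2 c).symm, qp_sw (hq2 d).symm,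
      qp_sw (hq2 e).symm, qp_sw (hq2 f).symm]]
  · -- G2.2
    exact hS
  · -- G3.1
    rw [hinvM]
    calc (e * D * iF) * (d * iD) * (F * iE)
        = (e * D) * (iF * (d * iD * F)) * iE := by noncomm_ring
      _ = (e * D) * (iF * (F * (d * iD))) * iE := by rw [hC]
      _ = (e * D) * ((iF * F) * (d * iD)) * iE := by noncomm_ring
      _ = e * ((D * d) * iD) * iE := by rw [hiFF, one_mul]; noncomm_ring
      _ = e * ((d * D) * iD) * iE := by rw [hdD.eq]
      _ = e * d * iE := by
          rw [show (d * D) * iD = d * (D * iD) from by noncomm_ring, hDiD, mul_one]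
  · -- G3.2
    rw [hinvM]
    calc (f * iF) * (F * iE) = f * ((iF * F) * iE) := by noncomm_ring
      _ = f * iE := by rw [hiFF, one_mul]
end

section
/- Let (t₁,t₂) be a q-Weyl pair in A. Then (s₁,s₂) := (q t₁⁻¹ t₂, t₁⁻¹) is again a q-Weyl pair, i.e. s₁s₂ = q² s₂ s₁, and the transformation B(t₁,t₂) := (q t₁⁻¹ t₂, t₁⁻¹) satisfies B ∘ B ∘ B = id, i.e. applying B three times to any q-Weyl pair returns the original pair. -/
/-- The quantum change-of-decoration transformation `B(t₁,t₂) := (q t₁⁻¹ t₂, t₁⁻¹)`,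
with the inverse taken via `Ring.inverse`. -/
noncomputable def Bmap {A : Type*} [Ring A] (q : A) (t : A × A) : A × A :=
  (q * Ring.inverse t.1 * t.2, Ring.inverse t.1)

/-!
On pairs of units `B` is the map `(u, v) ↦ (q u⁻¹ v, u⁻¹)` of the unit group. For central `q`
one computes `B²(u, v) = (v⁻¹, v⁻¹ u q⁻¹)`, and one more step gives back `(u, v)`, so `B³ = id`
on all pairs of units. That `B` preserves the Weyl relation comes down to `v u⁻¹ = q² u⁻¹ v`.
-/

section Group

variable {G : Type*} [Group G]

def rotateDecoration (q : G) (t : G × G) : G × G :=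
  (q * t.1⁻¹ * t.2, t.1⁻¹)

theorem mul_inv_eq_of_mul_eq_mul_mul {c u v : G} (hc : Commute c u⁻¹)
    (h : u * v = c * (v * u)) : v * u⁻¹ = c * (u⁻¹ * v) :=
  calc v * u⁻¹ = u⁻¹ * (u * v) * u⁻¹ := by group
    _ = c * (u⁻¹ * v) := by rw [h, ← mul_assoc, ← hc.eq]; group

theorem rotateDecoration_mul_eq {q c : G} {t : G × G} (hq : Commute q t.1⁻¹)
    (hc : ∀ g, Commute c g) (h : t.1 * t.2 = c * (t.2 * t.1)) :
    (rotateDecoration q t).1 * (rotateDecoration q t).2 =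
      c * ((rotateDecoration q t).2 * (rotateDecoration q t).1) := by
  simp only [rotateDecoration]
  rw [mul_assoc, mul_inv_eq_of_mul_eq_mul_mul (hc _) h, (hc _).symm.left_comm]
  simp only [mul_assoc, hq.left_comm]

theorem rotateDecoration_rotateDecoration {q : G} (hq : ∀ g, Commute q g) (t : G × G) :
    rotateDecoration q (rotateDecoration q t) = (t.2⁻¹, t.2⁻¹ * t.1 * q⁻¹) := by
  simp only [rotateDecoration, mul_inv_rev, inv_inv, Prod.mk.injEq]
  rw [(hq _).eq]
  constructor <;> group

theorem rotateDecoration_rotateDecoration_rotateDecoration {q : G} (hq : ∀ g, Commute q g)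
    (t : G × G) : rotateDecoration q (rotateDecoration q (rotateDecoration q t)) = t := by
  rw [rotateDecoration_rotateDecoration hq t]
  ext
  · simp only [rotateDecoration, inv_inv, mul_assoc, mul_inv_cancel_left]
    rw [← mul_assoc, (hq _).eq, mul_inv_cancel_right]
  · exact inv_inv _

end Group

section Ring

variable {A : Type*} [Ring A]

theorem Bmap_units (q : Aˣ) (t : Aˣ × Aˣ) :
    Bmap (q : A) (Prod.map Units.val Units.val t) =
      Prod.map Units.val Units.val (rotateDecoration q t) := by
  simp [Bmap, rotateDecoration]

theorem isWeylPair_units_iff (q : Aˣ) (t : Aˣ × Aˣ) :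
    IsWeylPair (q : A) (Prod.map Units.val Units.val t) ↔ t.1 * t.2 = q ^ 2 * (t.2 * t.1) := by
  simp [IsWeylPair, Units.ext_iff]

end Ring

/-- For a `q`-Weyl pair `(t₁,t₂)` (with `q` central and invertible), the pair
`B(t₁,t₂) = (q t₁⁻¹ t₂, t₁⁻¹)` is again a `q`-Weyl pair, and `B` has order three:
`B(B(B(t))) = t`. -/
theorem quantum_change_of_decoration_order_three {A : Type*} [Ring A] (q : A)
    (hq : IsUnit q) (hqc : ∀ a : A, Commute q a)
    (t : A × A) (ht : IsWeylPair q t) :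
    IsWeylPair q (Bmap q t) ∧ Bmap q (Bmap q (Bmap q t)) = t := by
  obtain ⟨q, rfl⟩ := hq
  obtain ⟨a, b⟩ := t
  obtain ⟨⟨u, rfl⟩, ⟨v, rfl⟩, huv⟩ := ht
  have hq_central : ∀ g : Aˣ, Commute q g := fun g => Units.ext (hqc g)
  have hweyl : u * v = q ^ 2 * (v * u) := Units.ext (by simpa using huv)
  rw [show ((u : A), (v : A)) = Prod.map Units.val Units.val (u, v) from rfl,
    Bmap_units, Bmap_units, Bmap_units, isWeylPair_units_iff,
    rotateDecoration_rotateDecoration_rotateDecoration hq_central]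
  exact ⟨rotateDecoration_mul_eq (hq_central _) (fun g => (hq_central g).pow_left 2) hweyl, rfl⟩
end

section
/- The ℂ-vector space of functions Ψ : R → ℂ satisfying λ'·Ψ(w) = Ψ(ωw)·(1 − wλ) for all w ∈ R is exactly one-dimensional: there exists a nonzero solution, and any two solutions are proportional. In particular, the solution of the compact quantum dilogarithm functional equation is unique up to a complex factor. -/
/-- The space of solutions `Ψ : R → ℂ` (where `R = {w : w^N = −1}`) of the compact quantum
dilogarithm functional equation `λ'·Ψ(w) = Ψ(ωw)·(1 − wλ)` is exactly one-dimensional: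
there is a solution not vanishing identically on `R`, and every solution is a complex
multiple of it on `R`. -/
theorem compact_qdilog_solution_unique (N : ℕ) (hN : 2 ≤ N)
    (ω : ℂ) (hω : IsPrimitiveRoot ω N)
    (lam : ℝ) (hlam : 0 < lam) :
    ∃ Ψ₀ : ℂ → ℂ,
      (∃ w : ℂ, w ^ N = -1 ∧ Ψ₀ w ≠ 0) ∧
      (∀ w : ℂ, w ^ N = -1 →
        (((1 + lam ^ N) ^ ((1 : ℝ) / N) : ℝ) : ℂ) * Ψ₀ w = Ψ₀ (ω * w) * (1 - w * lam)) ∧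
      ∀ Ψ : ℂ → ℂ,
        (∀ w : ℂ, w ^ N = -1 →
          (((1 + lam ^ N) ^ ((1 : ℝ) / N) : ℝ) : ℂ) * Ψ w = Ψ (ω * w) * (1 - w * lam)) →
        ∃ c : ℂ, ∀ w : ℂ, w ^ N = -1 → Ψ w = c * Ψ₀ w := by
  have hN0 : 0 < N := by omega
  have hNne : (N : ℝ) ≠ 0 := by positivity
  -- a fixed N-th root of -1
  obtain ⟨w₀, hw₀⟩ : ∃ z : ℂ, z ^ N = -1 := IsAlgClosed.exists_pow_nat_eq (-1) hN0
  have hw₀ne : w₀ ≠ 0 := by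
    intro h
    rw [h, zero_pow (by omega)] at hw₀
    exact one_ne_zero (neg_eq_zero.mp hw₀.symm)
  set L : ℂ := (((1 + lam ^ N) ^ ((1 : ℝ) / N) : ℝ) : ℂ) with hLdef
  have hx : (0 : ℝ) ≤ 1 + lam ^ N := by positivity
  have hLpowR : ((1 + lam ^ N) ^ ((1 : ℝ) / N)) ^ N = 1 + lam ^ N := by
    rw [← Real.rpow_natCast ((1 + lam ^ N) ^ ((1 : ℝ) / N)) N, ← Real.rpow_mul hx,
      one_div, inv_mul_cancel₀ hNne, Real.rpow_one]
  have hLpow : L ^ N = 1 + (lam : ℂ) ^ N := by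
    rw [hLdef, ← Complex.ofReal_pow, hLpowR]
    push_cast
    ring
  have hLne : L ≠ 0 := by
    have h : ((1 + lam ^ N) ^ ((1 : ℝ) / N)) ≠ 0 := by positivity
    rw [hLdef]
    exact Complex.ofReal_ne_zero.mpr h
  have hsumne : (1 : ℂ) + (lam : ℂ) ^ N ≠ 0 := by
    have h : ((1 + lam ^ N : ℝ) : ℂ) ≠ 0 := Complex.ofReal_ne_zero.mpr (by positivity)
    push_cast at h
    exact h
  -- membership of the orbit in R
  have hmem : ∀ k : ℕ, (ω ^ k * w₀) ^ N = -1 := by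
    intro k
    rw [mul_pow, ← pow_mul, mul_comm k N, pow_mul, hω.pow_eq_one, one_pow, one_mul, hw₀]
  -- factors never vanish
  have hne : ∀ w : ℂ, w ^ N = -1 → (1 : ℂ) - w * lam ≠ 0 := by
    intro w hw h
    have hlamne : (lam : ℂ) ≠ 0 := by exact_mod_cast hlam.ne'
    have h1 : w * (lam : ℂ) = 1 := by linear_combination -h
    have hw' : w = ((lam : ℂ))⁻¹ := eq_inv_of_mul_eq_one_left h1
    have : (((lam⁻¹ : ℝ) ^ N : ℝ) : ℂ) = -1 := by
      push_cast
      rw [← hw']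
      exact hw
    have h2 : ((lam⁻¹ : ℝ) ^ N : ℝ) = -1 := by exact_mod_cast this
    have : (0 : ℝ) < (lam⁻¹) ^ N := by positivity
    linarith
  set d : ℕ → ℂ := fun j => 1 - ω ^ j * w₀ * lam with hd
  have hdne : ∀ j, d j ≠ 0 := by
    intro j
    have := hne (ω ^ j * w₀) (hmem j)
    simpa [hd, mul_assoc] using this
  set P : ℕ → ℂ := fun k => ∏ j ∈ Finset.range k, d j with hP
  have hPne : ∀ k, P k ≠ 0 := fun k =>
    Finset.prod_ne_zero_iff.mpr fun j _ => hdne j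
  -- product over all of R
  have hprod : P N = 1 + (lam : ℂ) ^ N := by
    have e : (w₀ * (lam : ℂ)) ^ N = -(lam : ℂ) ^ N := by
      rw [mul_pow, hw₀]; ring
    have key := X_pow_sub_C_eq_prod hω hN0 e
    have := congrArg (Polynomial.eval 1) key
    simp only [Polynomial.eval_sub, Polynomial.eval_pow, Polynomial.eval_X, Polynomial.eval_C,
      Polynomial.eval_prod, one_pow] at this
    rw [hP]
    simp only [hd]
    rw [show (1 : ℂ) + (lam : ℂ) ^ N = 1 - (-(lam:ℂ)^N) by ring, this]
    apply Finset.prod_congr rfl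
    intro j _
    ring
  set a : ℕ → ℂ := fun k => L ^ k / P k with ha
  have ha0 : a 0 = 1 := by simp [ha, hP]
  have hrec : ∀ k, a (k + 1) * d k = L * a k := by
    intro k
    have h1 : P (k + 1) = P k * d k := Finset.prod_range_succ _ _
    simp only [ha]
    rw [h1, ← div_div, div_mul_cancel₀ _ (hdne k), pow_succ', mul_div_assoc]
  have hperiodN : ∀ k, a (k + N) = a k := by
    intro k
    have hPadd : P (N + k) = P N * ∏ j ∈ Finset.range k, d (N + j) :=
      Finset.prod_range_add d N k
    have hdshift : ∀ j, d (N + j) = d j := by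
      intro j
      simp only [hd, pow_add, hω.pow_eq_one, one_mul]
    have hPeq : P (k + N) = (1 + (lam : ℂ) ^ N) * P k := by
      rw [add_comm, hPadd, hprod]
      congr 1
      exact Finset.prod_congr rfl fun j _ => hdshift j
    simp only [ha]
    rw [hPeq, pow_add, hLpow,
      div_eq_div_iff (mul_ne_zero hsumne (hPne k)) (hPne k)]
    ring
  have hmod : ∀ m k, a (k + N * m) = a k := by
    intro m
    induction m with
    | zero => intro k; simp
    | succ n ih =>
      intro k
      have : k + N * (n + 1) = (k + N * n) + N := by ring
      rw [this, hperiodN, ih]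
  have hamod : ∀ k, a k = a (k % N) := by
    intro k
    conv_lhs => rw [← Nat.mod_add_div k N]
    exact hmod (k / N) (k % N)
  have haeq : ∀ i j : ℕ, ω ^ i = ω ^ j → a i = a j := by
    intro i j hij
    have horder : orderOf ω = N := (hω.eq_orderOf).symm
    have h1 : ω ^ (i % N) = ω ^ i := by rw [← horder]; exact pow_mod_orderOf ω i
    have h2 : ω ^ (j % N) = ω ^ j := by rw [← horder]; exact pow_mod_orderOf ω j
    have h3 : i % N = j % N :=
      hω.pow_inj (Nat.mod_lt i hN0) (Nat.mod_lt j hN0) (by rw [h1, h2, hij])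
    rw [hamod i, hamod j, h3]
  -- the distinguished solution
  set Ψ₀ : ℂ → ℂ := fun w => if h : ∃ k, k < N ∧ ω ^ k * w₀ = w then a h.choose else 0
    with hΨ₀
  have hrep : ∀ w : ℂ, w ^ N = -1 → ∃ k, k < N ∧ ω ^ k * w₀ = w := by
    intro w hw
    have h1 : (w / w₀) ^ N = 1 := by
      rw [div_pow, hw, hw₀]
      simp
    haveI : NeZero N := ⟨by omega⟩
    obtain ⟨i, hi, hωi⟩ := hω.eq_pow_of_pow_eq_one h1
    exact ⟨i, hi, by rw [hωi, div_mul_cancel₀ w hw₀ne]⟩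
  have hΨval : ∀ k : ℕ, Ψ₀ (ω ^ k * w₀) = a k := by
    intro k
    have hcond : ∃ j, j < N ∧ ω ^ j * w₀ = ω ^ k * w₀ :=
      hrep _ (hmem k)
    rw [hΨ₀]
    simp only
    rw [dif_pos hcond]
    have hspec := hcond.choose_spec.2
    have : ω ^ hcond.choose = ω ^ k := mul_right_cancel₀ hw₀ne hspec
    exact haeq _ _ this
  refine ⟨Ψ₀, ⟨w₀, hw₀, ?_⟩, ?_, ?_⟩
  · have := hΨval 0
    rw [pow_zero, one_mul] at this
    rw [this, ha0]
    exact one_ne_zero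
  · intro w hw
    obtain ⟨k, hk, rfl⟩ := hrep w hw
    have h1 : ω * (ω ^ k * w₀) = ω ^ (k + 1) * w₀ := by rw [pow_succ]; ring
    rw [hΨval k, h1, hΨval (k + 1)]
    have h2 : (1 : ℂ) - ω ^ k * w₀ * lam = d k := rfl
    rw [h2, hrec k]
  · intro Ψ hΨ
    refine ⟨Ψ w₀, ?_⟩
    have key : ∀ k : ℕ, Ψ (ω ^ k * w₀) = Ψ w₀ * a k := by
      intro k
      induction k with
      | zero => simp [ha0]
      | succ n ih =>
        have heq := hΨ (ω ^ n * w₀) (hmem n)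
        have h1 : ω * (ω ^ n * w₀) = ω ^ (n + 1) * w₀ := by rw [pow_succ]; ring
        have h2 : (1 : ℂ) - ω ^ n * w₀ * lam = d n := rfl
        rw [h1, ih, h2] at heq
        have h3 : Ψ (ω ^ (n + 1) * w₀) * d n = Ψ w₀ * a (n + 1) * d n := by
          rw [mul_assoc, hrec n, ← heq]
          ring
        exact mul_right_cancel₀ (hdne n) h3
    intro w hw
    obtain ⟨k, hk, rfl⟩ := hrep w hw
    rw [key k, hΨval k]
end

section
/- Let A be a unital ℂ-algebra, N ≥ 2 an integer, ω ∈ ℂ a primitive N-th root of unity, and P, Q ∈ A elements with PQ = ωQP. Then (P + Q)^N = P^N + Q^N. -/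
/-- Gaussian (q-)binomial coefficients, via the q-Pascal recursion. -/
def gb (q : ℂ) : ℕ → ℕ → ℂ
  | 0, 0 => 1
  | 0, _+1 => 0
  | _+1, 0 => 1
  | n+1, k+1 => gb q n k + q ^ (k+1) * gb q n (k+1)

lemma gb_zero (q : ℂ) (n : ℕ) : gb q n 0 = 1 := by cases n <;> rfl

lemma gb_of_lt (q : ℂ) : ∀ n k : ℕ, n < k → gb q n k = 0 := by
  intro n
  induction n with
  | zero => intro k hk; match k, hk with | k+1, _ => rfl
  | succ n ih =>
    intro k hk
    match k, hk with
    | k+1, hk =>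
      show gb q n k + q ^ (k+1) * gb q n (k+1) = 0
      rw [ih k (by omega), ih (k+1) (by omega)]; ring

lemma gb_self (q : ℂ) : ∀ n : ℕ, gb q n n = 1 := by
  intro n
  induction n with
  | zero => rfl
  | succ n ih =>
    show gb q n n + q ^ (n+1) * gb q n (n+1) = 1
    rw [ih, gb_of_lt q n (n+1) (by omega)]; ring

lemma gb_succ_succ (q : ℂ) (n k : ℕ) :
    gb q (n+1) (k+1) = gb q n k + q ^ (k+1) * gb q n (k+1) := rfl

/-- The second q-Pascal recursion. -/
lemma gb_succ_succ' (q : ℂ) : ∀ n k : ℕ,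
    gb q (n+1) (k+1) = q ^ (n - k) * gb q n k + gb q n (k+1) := by
  intro n
  induction n with
  | zero =>
    intro k
    match k with
    | 0 => show gb q 0 0 + q^1 * gb q 0 1 = q^0 * gb q 0 0 + gb q 0 1; simp [gb]
    | k+1 =>
      rw [gb_succ_succ, gb_of_lt q 0 (k+1) (by omega), gb_of_lt q 0 (k+2) (by omega)]
      ring
  | succ n ih =>
    intro k
    match k with
    | 0 =>
      have t1 := ih 0
      have t2 := gb_succ_succ q n 0
      have t3 := gb_succ_succ q (n+1) 0
      have z1 := gb_zero q (n+1)
      have z2 := gb_zero q n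
      simp only [Nat.sub_zero] at *
      linear_combination t3 + q*t1 - t2 + (1 - q^(n+1))*z1 + (q^(n+1)-1)*z2
    | j+1 =>
      rcases lt_or_ge j n with hj | hj
      · have A := gb_succ_succ q (n+1) (j+1)
        have B := ih j
        have C := ih (j+1)
        have D := gb_succ_succ q n j
        have E := gb_succ_succ q n (j+1)
        have h1 : n - j = (n - (j+1)) + 1 := by omega
        have h2 : n + 1 - (j+1) = (n - (j+1)) + 1 := by omega
        rw [h1] at B
        rw [h2]
        linear_combination A + B + q^(j+2)*C - (q*q^(n-(j+1)))*D - E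
      · rcases eq_or_lt_of_le hj with hj' | hj'
        · cases hj'
          have hz : ∀ m : ℕ, gb q m (m+1) = 0 := fun m => gb_of_lt q m (m+1) (by omega)
          simp [gb_self, hz]
        · rw [gb_of_lt q (n+1+1) (j+1+1) (by omega), gb_of_lt q (n+1) (j+1) (by omega),
            gb_of_lt q (n+1) (j+1+1) (by omega)]
          ring

lemma gb_key (q : ℂ) (n k : ℕ) (hk : k ≤ n) :
    (1 - q ^ (k+1)) * gb q (n+1) (k+1) = (1 - q ^ (n+1)) * gb q n k := by
  have h1 := gb_succ_succ q n k
  have h2 := gb_succ_succ' q n k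
  have hpow : q ^ (k+1) * q ^ (n-k) = q ^ (n+1) := by
    rw [← pow_add]; congr 1; omega
  linear_combination h1 - q^(k+1) * h2 - gb q n k * hpow

lemma gb_vanish {N : ℕ} {ω : ℂ} (hω : IsPrimitiveRoot ω N) (k : ℕ)
    (hk0 : 0 < k) (hkN : k < N) : gb ω N k = 0 := by
  obtain ⟨k, rfl⟩ : ∃ j, k = j + 1 := ⟨k - 1, by omega⟩
  obtain ⟨n, rfl⟩ : ∃ m, N = m + 1 := ⟨N - 1, by omega⟩
  have key := gb_key ω n k (by omega)
  have hN1 : ω ^ (n+1) = 1 := hω.pow_eq_one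
  have hk1 : ω ^ (k+1) ≠ 1 := hω.pow_ne_one_of_pos_of_lt (by omega) (by omega)
  have : (1 - ω ^ (k+1)) * gb ω (n+1) (k+1) = 0 := by rw [key, hN1]; ring
  rcases mul_eq_zero.mp this with h | h
  · exact absurd (sub_eq_zero.mp h).symm hk1
  · exact h

lemma qpow_comm {A : Type*} [Ring A] [Algebra ℂ A] (ω : ℂ) (P Q : A)
    (h : P * Q = ω • (Q * P)) (k : ℕ) : P * Q ^ k = ω ^ k • (Q ^ k * P) := by
  induction k with
  | zero => simp
  | succ k ih =>
    calc P * Q ^ (k+1) = (P * Q ^ k) * Q := by rw [pow_succ, mul_assoc]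
    _ = ω ^ k • (Q ^ k * (P * Q)) := by rw [ih, smul_mul_assoc, mul_assoc]
    _ = ω ^ k • (Q ^ k * (ω • (Q * P))) := by rw [h]
    _ = ω ^ (k+1) • (Q ^ (k+1) * P) := by
        rw [mul_smul_comm, smul_smul, pow_succ ω k, pow_succ Q k, mul_assoc]

lemma gb_expansion {A : Type*} [Ring A] [Algebra ℂ A] (ω : ℂ) (P Q : A)
    (h : P * Q = ω • (Q * P)) (n : ℕ) :
    (P + Q) ^ n = ∑ k ∈ Finset.range (n+1), gb ω n k • (Q ^ k * P ^ (n - k)) := by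
  induction n with
  | zero => simp [gb]
  | succ n ih =>
    rw [pow_succ', ih, Finset.mul_sum]
    have expand : ∀ k ∈ Finset.range (n+1),
        (P + Q) * (gb ω n k • (Q ^ k * P ^ (n - k)))
          = (ω ^ k * gb ω n k) • (Q ^ k * P ^ (n + 1 - k))
            + gb ω n k • (Q ^ (k+1) * P ^ (n - k)) := by
      intro k hk
      have hkn : k ≤ n := by simpa [Nat.lt_succ_iff] using hk
      have hpk : n + 1 - k = (n - k) + 1 := by omega
      rw [add_mul]
      congr 1
      · rw [mul_smul_comm, ← mul_assoc, qpow_comm ω P Q h k, smul_mul_assoc,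
          smul_smul, mul_assoc, ← pow_succ', hpk, mul_comm]
      · rw [mul_smul_comm, ← mul_assoc, ← pow_succ']
    rw [Finset.sum_congr rfl expand, Finset.sum_add_distrib]
    rw [Finset.sum_range_succ' (fun k => gb ω (n+1) k • (Q ^ k * P ^ (n + 1 - k))) (n+1)]
    have rhs_term : ∀ k ∈ Finset.range (n+1),
        gb ω (n+1) (k+1) • (Q ^ (k+1) * P ^ (n + 1 - (k+1)))
          = (ω ^ (k+1) * gb ω n (k+1)) • (Q ^ (k+1) * P ^ (n - k))
            + gb ω n k • (Q ^ (k+1) * P ^ (n - k)) := by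
      intro k hk
      rw [gb_succ_succ, show n + 1 - (k+1) = n - k from by omega, add_smul, add_comm, mul_smul]
    rw [Finset.sum_congr rfl rhs_term, Finset.sum_add_distrib]
    simp only [gb_zero, one_smul, pow_zero, Nat.sub_zero, one_mul]
    rw [Finset.sum_range_succ' (fun k => (ω ^ k * gb ω n k) • (Q ^ k * P ^ (n + 1 - k))) n]
    simp only [pow_zero, one_mul, gb_zero, Nat.sub_zero, one_smul,
      show ∀ k : ℕ, n + 1 - (k+1) = n - k from fun k => by omega]
    rw [Finset.sum_range_succ (fun k => (ω ^ (k+1) * gb ω n (k+1)) • (Q ^ (k+1) * P ^ (n - k))) n]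
    rw [gb_of_lt ω n (n+1) (by omega)]
    simp only [mul_zero, zero_smul, add_zero]
    abel

/-- The Weyl-pair "freshman's dream": if `P Q = ω Q P` in a unital `ℂ`-algebra, with `ω` a
primitive `N`-th root of unity regarded as a central scalar, then `(P+Q)^N = P^N + Q^N`. -/
theorem weyl_pair_add_pow {A : Type*} [Ring A] [Algebra ℂ A]
    (N : ℕ) (hN : 2 ≤ N) (ω : ℂ) (hω : IsPrimitiveRoot ω N)
    (P Q : A) (h : P * Q = ω • (Q * P)) :
    (P + Q) ^ N = P ^ N + Q ^ N := by
  rw [gb_expansion ω P Q h N]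
  rw [Finset.sum_range_succ, gb_self, one_smul, Nat.sub_self, pow_zero, mul_one]
  rw [Finset.sum_eq_single 0]
  · simp [gb_zero]
  · intro k hk hk0
    rw [gb_vanish hω k (Nat.pos_of_ne_zero hk0) (Finset.mem_range.mp hk), zero_smul]
  · intro hmem
    exact absurd (Finset.mem_range.mpr (by omega)) hmem
end

section
/- Let x = (x₁,x₂) and y = (y₁,y₂) be commuting ω-Weyl pairs of level N in a unital ℂ-algebra A, and let λ > 0. Then x•_λy and x*_λy are again ω-Weyl pairs of level N: each pair (a₁,a₂) among them satisfies a₁a₂ = ωa₂a₁ and a₁^N = a₂^N = 1 (in particular ((x₂ + x₁y₂λ)/λ')^N = 1), and the two pairs commute componentwise: (x•_λy)_i (x*_λy)_j = (x*_λy)_j (x•_λy)_i for all i, j ∈ {1,2}. Hence the root-of-unity decorated flip M_h is an algebra homomorphism of the cyclic Weyl algebra. -/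
/-- An `ω`-Weyl pair of level `N` in a unital `ℂ`-algebra:
`a₁a₂ = ω a₂a₁` and `a₁^N = a₂^N = 1`. -/
def IsCyclicWeylPair {A : Type*} [Ring A] [Algebra ℂ A] (ω : ℂ) (N : ℕ) (a : A × A) : Prop :=
  a.1 * a.2 = ω • (a.2 * a.1) ∧ a.1 ^ N = 1 ∧ a.2 ^ N = 1

/-- `λ' := (1 + λ^N)^{1/N}`, the positive real `N`-th root. -/
noncomputable def lamPrime (lam : ℝ) (N : ℕ) : ℝ := (1 + lam ^ N) ^ ((1 : ℝ) / N)

/-- The root-of-unity "dot" operation `x •_λ y := (x₁y₁, (x₂ + x₁y₂λ)/λ')`. -/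
noncomputable def Cdot {A : Type*} [Ring A] [Algebra ℂ A] (lam : ℝ) (N : ℕ)
    (x y : A × A) : A × A :=
  (x.1 * y.1, (((lamPrime lam N)⁻¹ : ℝ) : ℂ) • (x.2 + ((lam : ℝ) : ℂ) • (x.1 * y.2)))

/-- The root-of-unity "star" operation
`x *_λ y := (y₁x₂((x•_λy)₂)⁻¹, y₂((x•_λy)₂)⁻¹)`. -/
noncomputable def Cstar {A : Type*} [Ring A] [Algebra ℂ A] (lam : ℝ) (N : ℕ)
    (x y : A × A) : A × A :=
  (y.1 * x.2 * Ring.inverse (Cdot lam N x y).2, y.2 * Ring.inverse (Cdot lam N x y).2)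

section WeylHelpers

open Polynomial Finset

private lemma weyl_swap {A : Type*} [Ring A] {a b : A} (h : a * b = b * a) (c : A) :
    a * (b * c) = b * (a * c) := by
  rw [← mul_assoc, h, mul_assoc]

private lemma weyl_qswap {A : Type*} [Ring A] [Algebra ℂ A] {ω : ℂ} {a b : A}
    (h : a * b = ω • (b * a)) (c : A) :
    a * (b * c) = ω • (b * (a * c)) := by
  rw [← mul_assoc, h, smul_mul_assoc, mul_assoc]

private lemma sign_pow_sum (N : ℕ) (hN : 0 < N) (ω : ℂ) (hω : IsPrimitiveRoot ω N) :
    (-1 : ℂ) ^ (N + 1) * ω ^ (∑ k ∈ range N, k) = 1 := by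
  have h2 : (∑ k ∈ range N, k) * 2 = N * (N - 1) := Finset.sum_range_id_mul_two N
  rcases Nat.even_or_odd N with ⟨m, hm⟩ | ⟨m, hm⟩
  · subst hm
    have hm0 : 0 < m := by omega
    obtain ⟨k, rfl⟩ : ∃ k, m = k + 1 := ⟨m - 1, by omega⟩
    have e : k + 1 + (k + 1) - 1 = 2 * k + 1 := by omega
    have hS : (∑ k' ∈ range (k + 1 + (k + 1)), k') = (k + 1) * (2 * k + 1) := by
      refine Nat.eq_of_mul_eq_mul_right two_pos ?_
      rw [h2, e]; ring
    have hωm : ω ^ (k + 1) = -1 := by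
      have hsq : ω ^ (k + 1) * ω ^ (k + 1) = 1 := by
        rw [← pow_add]; exact hω.pow_eq_one
      rcases mul_self_eq_one_iff.mp hsq with h | h
      · exact absurd h (hω.pow_ne_one_of_pos_of_lt (by omega) (by omega))
      · exact h
    rw [hS, pow_mul, hωm, ← pow_add]
    exact Even.neg_one_pow ⟨2 * k + 2, by ring⟩
  · subst hm
    have hS : (∑ k ∈ range (2 * m + 1), k) = (2 * m + 1) * m := by
      refine Nat.eq_of_mul_eq_mul_right two_pos ?_
      rw [h2, Nat.add_sub_cancel]; ring
    rw [hS, pow_mul, hω.pow_eq_one, one_pow, mul_one]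
    exact Even.neg_one_pow ⟨m + 1, by omega⟩

private lemma prod_one_add_eval (N : ℕ) (hN : 0 < N) (ζ : ℂ) (hζ : IsPrimitiveRoot ζ N)
    (z : ℂ) : ∏ k ∈ range N, (1 + ζ ^ k * z) = 1 + (-1 : ℂ) ^ (N + 1) * z ^ N := by
  rcases eq_or_ne z 0 with rfl | hz
  · simp [hN.ne']
  · have h := congrArg (eval z⁻¹)
      (X_pow_sub_C_eq_prod hζ hN (α := (-1 : ℂ)) (a := (-1 : ℂ) ^ N) rfl)
    simp only [eval_sub, eval_pow, eval_X, eval_C, eval_prod] at h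
    calc ∏ k ∈ range N, (1 + ζ ^ k * z)
        = ∏ k ∈ range N, (z * (z⁻¹ - ζ ^ k * (-1))) := by
          refine prod_congr rfl fun k _ => ?_
          field_simp
          ring
      _ = z ^ N * ∏ k ∈ range N, (z⁻¹ - ζ ^ k * (-1)) := by
          rw [prod_mul_distrib, prod_const, card_range]
      _ = z ^ N * ((z⁻¹) ^ N - (-1) ^ N) := by rw [← h]
      _ = 1 + (-1 : ℂ) ^ (N + 1) * z ^ N := by
          rw [inv_pow]
          field_simp
          ring

private lemma prod_one_add_poly (N : ℕ) (hN : 0 < N) (ζ : ℂ) (hζ : IsPrimitiveRoot ζ N) :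
    ∏ k ∈ range N, (1 + C (ζ ^ k) * X) = 1 + C ((-1 : ℂ) ^ (N + 1)) * X ^ N := by
  apply Polynomial.funext
  intro z
  simp only [eval_prod, eval_add, eval_one, eval_mul, eval_C, eval_X, eval_pow]
  exact prod_one_add_eval N hN ζ hζ z

private lemma add_pow_prim_root {A : Type*} [Ring A] [Algebra ℂ A] {N : ℕ} (hN : 0 < N)
    {ω : ℂ} (hω : IsPrimitiveRoot ω N) {u v : A} (hu : u ^ N = 1)
    (hcomm : v * u = ω • (u * v)) : (u + v) ^ N = u ^ N + v ^ N := by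
  have hω0 : ω ≠ 0 := hω.ne_zero hN.ne'
  set ui := u ^ (N - 1) with hui
  have h1 : u * ui = 1 := by
    rw [hui, ← pow_succ', Nat.sub_add_cancel hN, hu]
  have h2 : ui * u = 1 := by
    rw [hui, ← pow_succ, Nat.sub_add_cancel hN, hu]
  set t := v * ui with ht
  have htu : t * u = v := by rw [ht, mul_assoc, h2, mul_one]
  have huv : u * v = ω⁻¹ • (v * u) := by
    rw [hcomm, smul_smul, inv_mul_cancel₀ hω0, one_smul]
  have hut : u * t = ω⁻¹ • (t * u) := by
    rw [htu, ht, ← mul_assoc, huv, smul_mul_assoc, mul_assoc, h1, mul_one]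
  have hpow : ∀ m : ℕ, u ^ m * t = (ω⁻¹ ^ m) • (t * u ^ m) := by
    intro m
    induction m with
    | zero => simp
    | succ m ih =>
      rw [pow_succ, mul_assoc, hut, mul_smul_comm, ← mul_assoc, ih, smul_mul_assoc,
        smul_smul, mul_assoc, ← pow_succ, ← pow_succ']
  have huiv : ui * v = ω • (v * ui) := by
    calc ui * v = ui * (v * (u * ui)) := by rw [h1, mul_one]
      _ = ui * (v * u) * ui := by simp only [mul_assoc]
      _ = ui * (ω • (u * v)) * ui := by rw [hcomm]
      _ = ω • (ui * u * (v * ui)) := by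
          rw [mul_smul_comm, smul_mul_assoc, mul_assoc, mul_assoc, mul_assoc]
      _ = ω • (v * ui) := by rw [h2, one_mul]
  have huipow : ∀ m : ℕ, ui ^ m * v = (ω ^ m) • (v * ui ^ m) := by
    intro m
    induction m with
    | zero => simp
    | succ m ih =>
      rw [pow_succ, mul_assoc, huiv, mul_smul_comm, ← mul_assoc, ih, smul_mul_assoc,
        smul_smul, mul_assoc, ← pow_succ, ← pow_succ']
  have htpow : ∀ m : ℕ, t ^ m = (ω ^ (∑ k ∈ range m, k)) • (v ^ m * ui ^ m) := by
    intro m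
    induction m with
    | zero => simp
    | succ m ih =>
      rw [pow_succ, ih, smul_mul_assoc]
      rw [ht]
      calc (ω ^ (∑ k ∈ range m, k)) • (v ^ m * ui ^ m * (v * ui))
          = (ω ^ (∑ k ∈ range m, k)) • (v ^ m * (ui ^ m * v) * ui) := by
            rw [mul_assoc, mul_assoc, mul_assoc]
        _ = (ω ^ (∑ k ∈ range m, k)) • (v ^ m * ((ω ^ m) • (v * ui ^ m)) * ui) := by
            rw [huipow]
        _ = (ω ^ (∑ k ∈ range m, k) * ω ^ m) • (v ^ (m + 1) * ui ^ (m + 1)) := by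
            rw [mul_smul_comm, smul_mul_assoc, smul_smul]
            congr 1
            simp only [pow_succ, mul_assoc]
        _ = (ω ^ (∑ k ∈ range (m + 1), k)) • (v ^ (m + 1) * ui ^ (m + 1)) := by
            rw [← pow_add, Finset.sum_range_succ]
  have key : ∀ m : ℕ, (u + v) ^ m =
      (aeval t (∏ k ∈ range m, (1 + C ((ω⁻¹) ^ k) * X))) * u ^ m := by
    intro m
    induction m with
    | zero => simp
    | succ m ih =>
      have step : u ^ m * (u + v) = (1 + (ω⁻¹ ^ m) • t) * u ^ (m + 1) := by
        rw [mul_add, add_mul, one_mul, smul_mul_assoc, ← htu, ← mul_assoc, hpow,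
          smul_mul_assoc, mul_assoc, ← pow_succ]
      have haev : aeval t (1 + C ((ω⁻¹) ^ m) * X) = 1 + (ω⁻¹ ^ m) • t := by
        simp [Algebra.smul_def]
      rw [pow_succ, ih, mul_assoc, step, Finset.prod_range_succ, map_mul, haev,
        mul_assoc]
  have hsum := sign_pow_sum N hN ω hω
  have huiN : ui ^ N = 1 := by
    rw [hui, ← pow_mul, mul_comm, pow_mul, hu, one_pow]
  calc (u + v) ^ N = (aeval t (∏ k ∈ range N, (1 + C ((ω⁻¹) ^ k) * X))) * u ^ N := key N
    _ = (aeval t (1 + C ((-1 : ℂ) ^ (N + 1)) * X ^ N)) * u ^ N := by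
        rw [prod_one_add_poly N hN ω⁻¹ hω.inv]
    _ = (1 + ((-1 : ℂ) ^ (N + 1)) • t ^ N) * u ^ N := by
        simp [Algebra.smul_def]
    _ = (1 + v ^ N) * u ^ N := by
        rw [htpow N, huiN, mul_one, smul_smul, hsum, one_smul]
    _ = u ^ N + v ^ N := by rw [add_mul, one_mul, hu, mul_one]

end WeylHelpers

/-- For commuting `ω`-Weyl pairs `x`, `y` of level `N` and `λ > 0`, the pairs `x •_λ y`
and `x *_λ y` are again `ω`-Weyl pairs of level `N` (in particular
`((x₂ + x₁y₂λ)/λ')^N = 1`), and the two pairs commute componentwise; hence the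
root-of-unity decorated flip is an algebra homomorphism of the cyclic Weyl algebra. -/
theorem root_of_unity_flip_preserves_weyl_pairs {A : Type*} [Ring A] [Algebra ℂ A]
    (N : ℕ) (hN : 2 ≤ N) (ω : ℂ) (hω : IsPrimitiveRoot ω N)
    (lam : ℝ) (hlam : 0 < lam)
    (x y : A × A)
    (hx : IsCyclicWeylPair ω N x) (hy : IsCyclicWeylPair ω N y)
    (hxy : PairCommute x y) :
    IsCyclicWeylPair ω N (Cdot lam N x y) ∧
    IsCyclicWeylPair ω N (Cstar lam N x y) ∧
    PairCommute (Cdot lam N x y) (Cstar lam N x y) := by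
  have hNpos : 0 < N := by omega
  have hω0 : ω ≠ 0 := hω.ne_zero hNpos.ne'
  obtain ⟨x1, x2⟩ := x
  obtain ⟨y1, y2⟩ := y
  obtain ⟨hx12, hx1N, hx2N⟩ := hx
  obtain ⟨hy12, hy1N, hy2N⟩ := hy
  dsimp only at hx12 hx1N hx2N hy12 hy1N hy2N
  have h11 : Commute x1 y1 := by simpa using hxy 0 0
  have h12 : Commute x1 y2 := by simpa using hxy 0 1
  have h21 : Commute x2 y1 := by simpa using hxy 1 0
  have h22 : Commute x2 y2 := by simpa using hxy 1 1
  set l : ℂ := ((lam : ℝ) : ℂ) with hl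
  set r : ℂ := (((lamPrime lam N)⁻¹ : ℝ) : ℂ) with hr
  set c2 : A := r • (x2 + l • (x1 * y2)) with hc2
  set ci : A := c2 ^ (N - 1) with hci
  -- scalar facts
  have hbase : (0 : ℝ) < 1 + lam ^ N := by positivity
  have hNne : (N : ℝ) ≠ 0 := Nat.cast_ne_zero.mpr hNpos.ne'
  have hlpN : lamPrime lam N ^ N = 1 + lam ^ N := by
    rw [lamPrime, ← Real.rpow_natCast ((1 + lam ^ N) ^ ((1 : ℝ) / N)) N,
      ← Real.rpow_mul hbase.le, one_div, inv_mul_cancel₀ hNne, Real.rpow_one]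
  have hreal : ((lamPrime lam N)⁻¹) ^ N * (1 + lam ^ N) = 1 := by
    rw [inv_pow, hlpN]; exact inv_mul_cancel₀ hbase.ne'
  have hscal : r ^ N * (1 + l ^ N) = 1 := by
    rw [hr, hl]; exact_mod_cast hreal
  -- the q-relation for u = x2, v = l • (x1 * y2)
  have hvu : (l • (x1 * y2)) * x2 = ω • (x2 * (l • (x1 * y2))) := by
    calc (l • (x1 * y2)) * x2 = l • (x1 * (y2 * x2)) := by rw [smul_mul_assoc, mul_assoc]
      _ = l • (x1 * (x2 * y2)) := by rw [h22.symm.eq]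
      _ = l • (ω • (x2 * (x1 * y2))) := by rw [weyl_qswap hx12 y2]
      _ = ω • (x2 * (l • (x1 * y2))) := by rw [mul_smul_comm, smul_comm]
  have hWpow : (x2 + l • (x1 * y2)) ^ N = (1 + l ^ N) • 1 := by
    rw [add_pow_prim_root hNpos hω hx2N hvu, hx2N, smul_pow, h12.mul_pow, hx1N, hy2N,
      mul_one, add_smul, one_smul]
  have hc2N : c2 ^ N = 1 := by
    rw [hc2, smul_pow, hWpow, smul_smul, hscal, one_smul]
  have hcci : c2 * ci = 1 := by
    rw [hci, ← pow_succ', Nat.sub_add_cancel hNpos, hc2N]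
  have hicc : ci * c2 = 1 := by
    rw [hci, ← pow_succ, Nat.sub_add_cancel hNpos, hc2N]
  have hciN : ci ^ N = 1 := by
    rw [hci, ← pow_mul, mul_comm, pow_mul, hc2N, one_pow]
  have hinv : Ring.inverse c2 = ci := Ring.inverse_unit (⟨c2, ci, hcci, hicc⟩ : Aˣ)
  -- the first Weyl pair relation for Cdot
  have hd1u : x1 * y1 * x2 = ω • (x2 * (x1 * y1)) := by
    calc x1 * y1 * x2 = x1 * (y1 * x2) := by rw [mul_assoc]
      _ = x1 * (x2 * y1) := by rw [h21.symm.eq]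
      _ = ω • (x2 * (x1 * y1)) := weyl_qswap hx12 y1
  have hd1v : x1 * y1 * (l • (x1 * y2)) = ω • ((l • (x1 * y2)) * (x1 * y1)) := by
    calc x1 * y1 * (l • (x1 * y2)) = l • (x1 * (y1 * (x1 * y2))) := by
          rw [mul_smul_comm, mul_assoc]
      _ = l • (x1 * (x1 * (y1 * y2))) := by rw [weyl_swap h11.symm.eq y2]
      _ = l • (x1 * (x1 * (ω • (y2 * y1)))) := by rw [hy12]
      _ = (l * ω) • (x1 * (x1 * (y2 * y1))) := by
          rw [mul_smul_comm, mul_smul_comm, smul_smul]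
      _ = (l * ω) • (x1 * (y2 * (x1 * y1))) := by rw [weyl_swap h12.eq y1]
      _ = ω • ((l • (x1 * y2)) * (x1 * y1)) := by
          rw [smul_mul_assoc, mul_assoc, smul_smul, mul_comm l ω]
  have hd1c2 : x1 * y1 * c2 = ω • (c2 * (x1 * y1)) := by
    have hW' : x1 * y1 * (x2 + l • (x1 * y2)) =
        ω • ((x2 + l • (x1 * y2)) * (x1 * y1)) := by
      rw [mul_add, add_mul, smul_add, hd1u, hd1v]
    calc x1 * y1 * c2 = r • (x1 * y1 * (x2 + l • (x1 * y2))) := by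
          rw [hc2, mul_smul_comm]
      _ = r • (ω • ((x2 + l • (x1 * y2)) * (x1 * y1))) := by rw [hW']
      _ = ω • (c2 * (x1 * y1)) := by rw [hc2, smul_mul_assoc, smul_comm]
  have hd1N : (x1 * y1) ^ N = 1 := by
    rw [h11.mul_pow, hx1N, hy1N, mul_one]
  -- commutation of y1*x2 and y2 with c2 and ci
  have cW2 : Commute (y1 * x2) (x1 * y2) := by
    show y1 * x2 * (x1 * y2) = x1 * y2 * (y1 * x2)
    calc y1 * x2 * (x1 * y2) = y1 * (x2 * (x1 * y2)) := by rw [mul_assoc]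
      _ = x2 * (y1 * (x1 * y2)) := by rw [weyl_swap h21.symm.eq (x1 * y2)]
      _ = x2 * (x1 * (y1 * y2)) := by rw [weyl_swap h11.symm.eq y2]
      _ = x2 * (x1 * (ω • (y2 * y1))) := by rw [hy12]
      _ = ω • (x2 * (x1 * (y2 * y1))) := by rw [mul_smul_comm, mul_smul_comm]
      _ = x1 * (x2 * (y2 * y1)) := by rw [← weyl_qswap hx12 (y2 * y1)]
      _ = x1 * (y2 * (x2 * y1)) := by rw [weyl_swap h22.eq y1]
      _ = x1 * (y2 * (y1 * x2)) := by rw [h21.eq]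
      _ = x1 * y2 * (y1 * x2) := by rw [mul_assoc]
  have cyx2c2 : Commute (y1 * x2) c2 := by
    rw [hc2]
    exact (((h21.symm.mul_left (Commute.refl x2)).add_right (cW2.smul_right l))).smul_right r
  have cyx2ci : Commute (y1 * x2) ci := by rw [hci]; exact cyx2c2.pow_right _
  have cy2c2 : Commute y2 c2 := by
    rw [hc2]
    exact ((h22.symm.add_right ((h12.symm.mul_right (Commute.refl y2)).smul_right l))).smul_right r
  have cy2ci : Commute y2 ci := by rw [hci]; exact cy2c2.pow_right _
  -- the Weyl pair relations for Cstar
  have qyx2 : (y1 * x2) * y2 = ω • (y2 * (y1 * x2)) := by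
    calc y1 * x2 * y2 = y1 * (x2 * y2) := by rw [mul_assoc]
      _ = y1 * (y2 * x2) := by rw [h22.eq]
      _ = ω • (y2 * (y1 * x2)) := weyl_qswap hy12 x2
  have hab : (y1 * x2 * ci) * (y2 * ci) = ω • ((y2 * ci) * (y1 * x2 * ci)) := by
    calc (y1 * x2) * ci * (y2 * ci) = (y1 * x2) * (ci * (y2 * ci)) := by rw [mul_assoc]
      _ = (y1 * x2) * (y2 * (ci * ci)) := by rw [weyl_swap cy2ci.symm.eq ci]
      _ = ω • (y2 * ((y1 * x2) * (ci * ci))) := weyl_qswap qyx2 _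
      _ = ω • (y2 * (ci * ((y1 * x2) * ci))) := by rw [← weyl_swap cyx2ci.symm.eq ci]
      _ = ω • ((y2 * ci) * ((y1 * x2) * ci)) := by rw [← mul_assoc]
  have haN : (y1 * x2 * ci) ^ N = 1 := by
    rw [cyx2ci.mul_pow, h21.symm.mul_pow, hy1N, hx2N, hciN, one_mul, mul_one]
  have hbN : (y2 * ci) ^ N = 1 := by
    rw [cy2ci.mul_pow, hy2N, hciN, one_mul]
  -- commutation between the two new pairs
  have hcid1 : ci * (x1 * y1) = ω • ((x1 * y1) * ci) := by
    calc ci * (x1 * y1) = ci * (x1 * y1) * (c2 * ci) := by rw [hcci, mul_one]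
      _ = ci * (x1 * y1 * c2) * ci := by simp only [mul_assoc]
      _ = ci * (ω • (c2 * (x1 * y1))) * ci := by rw [hd1c2]
      _ = ω • (ci * c2 * ((x1 * y1) * ci)) := by
          rw [mul_smul_comm, smul_mul_assoc]; simp only [mul_assoc]
      _ = ω • ((x1 * y1) * ci) := by rw [hicc, one_mul]
  have hd1ci : (x1 * y1) * ci = ω⁻¹ • (ci * (x1 * y1)) := by
    rw [hcid1, smul_smul, inv_mul_cancel₀ hω0, one_smul]
  have G1 : x1 * y1 * (y1 * x2) = ω • ((y1 * x2) * (x1 * y1)) := by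
    have L : x1 * y1 * (y1 * x2) = ω • (x2 * (x1 * (y1 * y1))) := by
      calc x1 * y1 * (y1 * x2) = x1 * (y1 * (y1 * x2)) := by rw [mul_assoc]
        _ = x1 * (y1 * (x2 * y1)) := by rw [h21.symm.eq]
        _ = x1 * (x2 * (y1 * y1)) := by rw [weyl_swap h21.symm.eq y1]
        _ = ω • (x2 * (x1 * (y1 * y1))) := weyl_qswap hx12 _
    have R : (y1 * x2) * (x1 * y1) = x2 * (x1 * (y1 * y1)) := by
      calc y1 * x2 * (x1 * y1) = y1 * (x2 * (x1 * y1)) := by rw [mul_assoc]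
        _ = x2 * (y1 * (x1 * y1)) := by rw [weyl_swap h21.symm.eq (x1 * y1)]
        _ = x2 * (x1 * (y1 * y1)) := by rw [weyl_swap h11.symm.eq y1]
    rw [L, R]
  have G2 : x1 * y1 * y2 = ω • (y2 * (x1 * y1)) := by
    calc x1 * y1 * y2 = x1 * (y1 * y2) := by rw [mul_assoc]
      _ = x1 * (ω • (y2 * y1)) := by rw [hy12]
      _ = ω • (x1 * (y2 * y1)) := by rw [mul_smul_comm]
      _ = ω • (y2 * (x1 * y1)) := by rw [weyl_swap h12.eq y1]
  have K11 : Commute (x1 * y1) (y1 * x2 * ci) := by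
    show x1 * y1 * (y1 * x2 * ci) = y1 * x2 * ci * (x1 * y1)
    calc x1 * y1 * (y1 * x2 * ci) = (x1 * y1 * (y1 * x2)) * ci := by rw [← mul_assoc]
      _ = (ω • ((y1 * x2) * (x1 * y1))) * ci := by rw [G1]
      _ = ω • ((y1 * x2) * ((x1 * y1) * ci)) := by rw [smul_mul_assoc, mul_assoc]
      _ = ω • ((y1 * x2) * (ω⁻¹ • (ci * (x1 * y1)))) := by rw [hd1ci]
      _ = (ω * ω⁻¹) • ((y1 * x2) * (ci * (x1 * y1))) := by rw [mul_smul_comm, smul_smul]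
      _ = y1 * x2 * ci * (x1 * y1) := by
          rw [mul_inv_cancel₀ hω0, one_smul, ← mul_assoc, ← mul_assoc]
  have K12 : Commute (x1 * y1) (y2 * ci) := by
    show x1 * y1 * (y2 * ci) = y2 * ci * (x1 * y1)
    calc x1 * y1 * (y2 * ci) = (x1 * y1 * y2) * ci := by rw [← mul_assoc]
      _ = (ω • (y2 * (x1 * y1))) * ci := by rw [G2]
      _ = ω • (y2 * ((x1 * y1) * ci)) := by rw [smul_mul_assoc, mul_assoc]
      _ = ω • (y2 * (ω⁻¹ • (ci * (x1 * y1)))) := by rw [hd1ci]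
      _ = (ω * ω⁻¹) • (y2 * (ci * (x1 * y1))) := by rw [mul_smul_comm, smul_smul]
      _ = y2 * ci * (x1 * y1) := by
          rw [mul_inv_cancel₀ hω0, one_smul, ← mul_assoc, ← mul_assoc]
  have K21 : Commute c2 (y1 * x2 * ci) :=
    Commute.mul_right cyx2c2.symm ((Commute.refl c2).pow_right (N - 1))
  have K22 : Commute c2 (y2 * ci) :=
    Commute.mul_right cy2c2.symm ((Commute.refl c2).pow_right (N - 1))
  rw [← hinv] at hab haN hbN K11 K12 K21 K22
  refine ⟨⟨hd1c2, hd1N, hc2N⟩, ⟨hab, haN, hbN⟩, ?_⟩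
  intro i j
  fin_cases i <;> fin_cases j
  · exact K11
  · exact K12
  · exact K21
  · exact K22
end

section
/- Let V be a nonzero finite-dimensional complex vector space and U, W invertible linear endomorphisms of V with UW = ωWU and U^N = W^N = 1, such that the only subspaces of V invariant under both U and W are 0 and V (irreducibility). Then dim V = N. Moreover, if (V', U', W') is another such irreducible triple, there exists a linear isomorphism f : V → V' with f∘U = U'∘f and f∘W = W'∘f; i.e. the cyclic Weyl algebra at a primitive N-th root of unity has a unique irreducible finite-dimensional representation up to isomorphism. -/
/-- A representation of the cyclic Weyl algebra at `ω` on `V`: a pair of endomorphisms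
`U`, `W` with `UW = ω WU` and `U^N = W^N = 1`. -/
def IsCyclicWeylRep {V : Type*} [AddCommGroup V] [Module ℂ V]
    (ω : ℂ) (N : ℕ) (U W : Module.End ℂ V) : Prop :=
  U * W = ω • (W * U) ∧ U ^ N = 1 ∧ W ^ N = 1

/-- Irreducibility: the only subspaces invariant under both `U` and `W` are `⊥` and `⊤`. -/
def IsIrreducibleRep {V : Type*} [AddCommGroup V] [Module ℂ V]
    (U W : Module.End ℂ V) : Prop :=
  ∀ S : Submodule ℂ V, (∀ v ∈ S, U v ∈ S) → (∀ v ∈ S, W v ∈ S) → S = ⊥ ∨ S = ⊤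

/-!
Take an eigenvector `x` of `U`. Its eigenvalue is an `N`-th root of unity because `U^N = 1`, and
`W` multiplies `U`-eigenvalues by `ω`, so some `W^k x` is a `U`-eigenvector for the eigenvalue `1`;
call it `x` again. The vectors `W^k x`, `k < N`, are then `U`-eigenvectors for the distinct
eigenvalues `ω^k`, hence linearly independent, and their span is `U`- and `W`-invariant because
`W^N = 1`, hence all of `V` by irreducibility. In this basis `U` is the clock matrix `diag(ω^k)` and
`W` the cyclic shift, which pins down the representation.
-/

open Module Submodule Set

theorem mul_pow_eq_smul_pow_mul {R A : Type*} [CommSemiring R] [Semiring A] [Algebra R A]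
    {ω : R} {u w : A} (h : u * w = ω • (w * u)) (m : ℕ) :
    u * w ^ m = ω ^ m • (w ^ m * u) := by
  induction m with
  | zero => simp
  | succ m ih =>
    rw [pow_succ, ← mul_assoc, ih, smul_mul_assoc, mul_assoc, h, mul_smul_comm, smul_smul,
      ← mul_assoc, ← pow_succ, ← pow_succ]

theorem pow_val_fin_add_one {M : Type*} [Monoid M] {N : ℕ} [NeZero N] {a : M} (h : a ^ N = 1)
    (k : Fin N) : a ^ ((k + 1 : Fin N) : ℕ) = a ^ ((k : ℕ) + 1) := by
  rw [pow_eq_pow_mod ((k : ℕ) + 1) h, Fin.val_add, Fin.val_one', Nat.add_mod_mod]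

theorem Module.End.HasEigenvector.pow_apply_of_mul_eq_smul_mul {R M : Type*} [CommRing R]
    [AddCommGroup M] [Module R M] {ω μ : R} {U W : End R M} {x : M}
    (h : U * W = ω • (W * U)) (hW : IsUnit W) (hx : U.HasEigenvector μ x) (m : ℕ) :
    U.HasEigenvector (ω ^ m * μ) ((W ^ m) x) := by
  refine End.hasEigenvector_iff.2 ⟨End.mem_eigenspace_iff.2 ?_, ?_⟩
  · rw [← End.mul_apply, mul_pow_eq_smul_pow_mul h, LinearMap.smul_apply, End.mul_apply,
      hx.apply_eq_smul, map_smul, smul_smul]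
  · exact ((End.isUnit_iff _).1 (hW.pow m)).injective.ne_iff' (map_zero _) |>.2 hx.2

def IsClockShiftBasis {R V : Type*} [CommSemiring R] [AddCommMonoid V] [Module R V] {N : ℕ}
    [NeZero N] (ω : R) (U W : End R V) (b : Basis (Fin N) R V) : Prop :=
  ∀ k, U (b k) = ω ^ (k : ℕ) • b k ∧ W (b k) = b (k + 1)

theorem IsClockShiftBasis.exists_linearEquiv {R V V' : Type*} [CommSemiring R] [AddCommMonoid V]
    [Module R V] [AddCommMonoid V'] [Module R V'] {N : ℕ} [NeZero N] {ω : R}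
    {U W : End R V} {U' W' : End R V'} {b : Basis (Fin N) R V} {b' : Basis (Fin N) R V'}
    (hb : IsClockShiftBasis ω U W b) (hb' : IsClockShiftBasis ω U' W' b') :
    ∃ f : V ≃ₗ[R] V', (∀ v, f (U v) = U' (f v)) ∧ ∀ v, f (W v) = W' (f v) := by
  set f := b.equiv b' (Equiv.refl _)
  have intertwines {T : End R V} {T' : End R V'} (h : ∀ k, f (T (b k)) = T' (b' k)) (v : V) :
      f (T v) = T' (f v) :=
    LinearMap.congr_fun (b.ext (f₁ := f.toLinearMap ∘ₗ T) (f₂ := T' ∘ₗ f.toLinearMap) fun k ↦ by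
      simpa [f] using h k) v
  refine ⟨f, intertwines fun k ↦ ?_, intertwines fun k ↦ ?_⟩
  · simp [f, (hb k).1, (hb' k).1]
  · simp [f, (hb k).2, (hb' k).2]

section

variable {V : Type*} [AddCommGroup V] [Module ℂ V]

theorem IsIrreducibleRep.span_range_eq_top {U W : End ℂ V} (hirr : IsIrreducibleRep U W)
    {ι : Type*} {c : ι → V} (hU : ∀ i, U (c i) ∈ span ℂ (range c))
    (hW : ∀ i, W (c i) ∈ span ℂ (range c)) {i : ι} (hi : c i ≠ 0) :
    span ℂ (range c) = ⊤ := by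
  have invariant (T : End ℂ V) (hT : ∀ i, T (c i) ∈ span ℂ (range c)) :
      ∀ v ∈ span ℂ (range c), T v ∈ span ℂ (range c) :=
    fun _ hv ↦ span_le (p := (span ℂ (range c)).comap T) |>.2 (range_subset_iff.2 hT) hv
  refine (hirr _ (invariant U hU) (invariant W hW)).resolve_left fun hbot ↦ hi ?_
  simpa [hbot] using (subset_span (mem_range_self i) : c i ∈ span ℂ (range c))

theorem IsCyclicWeylRep.exists_hasEigenvector_one [FiniteDimensional ℂ V] [Nontrivial V]
    {N : ℕ} [NeZero N] {ω : ℂ} (hω : IsPrimitiveRoot ω N) {U W : End ℂ V}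
    (hrep : IsCyclicWeylRep ω N U W) : ∃ x, U.HasEigenvector 1 x := by
  obtain ⟨hUW, hUN, hWN⟩ := hrep
  obtain ⟨ν, hν⟩ := U.exists_eigenvalue
  obtain ⟨x, hx⟩ := hν.exists_hasEigenvector
  have hνN : ν ^ N = 1 := smul_left_injective ℂ hx.2 <| by simpa [hUN] using (hx.pow_apply N).symm
  obtain ⟨k, -, hk⟩ := hω.eq_pow_of_pow_eq_one (ξ := ν⁻¹) (by rw [inv_pow, hνN, inv_one])
  have hν0 : ν ≠ 0 := by rintro rfl; simp [NeZero.ne N] at hνN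
  refine ⟨(W ^ k) x, ?_⟩
  simpa [hk, hν0] using
    hx.pow_apply_of_mul_eq_smul_mul hUW (IsUnit.of_pow_eq_one hWN (NeZero.ne N)) k

theorem IsCyclicWeylRep.exists_isClockShiftBasis [FiniteDimensional ℂ V] [Nontrivial V]
    {N : ℕ} [NeZero N] {ω : ℂ} (hω : IsPrimitiveRoot ω N) {U W : End ℂ V}
    (hrep : IsCyclicWeylRep ω N U W) (hirr : IsIrreducibleRep U W) :
    ∃ b : Basis (Fin N) ℂ V, IsClockShiftBasis ω U W b := by
  obtain ⟨x, hx⟩ := hrep.exists_hasEigenvector_one hω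
  obtain ⟨hUW, -, hWN⟩ := hrep
  set c : Fin N → V := fun k ↦ (W ^ (k : ℕ)) x
  have hUc (k : Fin N) : U.HasEigenvector (ω ^ (k : ℕ)) (c k) := by
    simpa using hx.pow_apply_of_mul_eq_smul_mul hUW (IsUnit.of_pow_eq_one hWN (NeZero.ne N)) k
  have hWc (k : Fin N) : W (c k) = c (k + 1) := by
    simp only [c, pow_val_fin_add_one hWN, pow_succ', End.mul_apply]
  have hli : LinearIndependent ℂ c :=
    U.eigenvectors_linearIndependent' _ (fun i j hij ↦ Fin.ext (hω.pow_inj i.2 j.2 hij)) c hUc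
  have hspan : span ℂ (range c) = ⊤ :=
    hirr.span_range_eq_top
      (fun k ↦ (hUc k).apply_eq_smul ▸ smul_mem _ _ (subset_span (mem_range_self k)))
      (fun k ↦ hWc k ▸ subset_span (mem_range_self _)) (hUc 0).2
  exact ⟨.mk hli hspan.ge, fun k ↦ by simpa using ⟨(hUc k).apply_eq_smul, hWc k⟩⟩

end

/-- The cyclic Weyl algebra at a primitive `N`-th root of unity has a unique irreducible
finite-dimensional representation up to isomorphism: any irreducible representation on a
nonzero finite-dimensional complex vector space has dimension `N`, and any two such are
intertwined by a linear isomorphism. -/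
theorem cyclic_weyl_unique_irreducible_rep
    (N : ℕ) (hN : 2 ≤ N) (ω : ℂ) (hω : IsPrimitiveRoot ω N)
    {V : Type*} [AddCommGroup V] [Module ℂ V] [FiniteDimensional ℂ V] [Nontrivial V]
    (U W : Module.End ℂ V)
    (hrep : IsCyclicWeylRep ω N U W) (hirr : IsIrreducibleRep U W) :
    Module.finrank ℂ V = N ∧
    ∀ {V' : Type*} [AddCommGroup V'] [Module ℂ V'] [FiniteDimensional ℂ V'] [Nontrivial V']
      (U' W' : Module.End ℂ V'),
      IsCyclicWeylRep ω N U' W' → IsIrreducibleRep U' W' →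
      ∃ f : V ≃ₗ[ℂ] V', (∀ v : V, f (U v) = U' (f v)) ∧ (∀ v : V, f (W v) = W' (f v)) := by
  have : NeZero N := ⟨by omega⟩
  obtain ⟨b, hb⟩ := hrep.exists_isClockShiftBasis hω hirr
  refine ⟨by rw [finrank_eq_card_basis b, Fintype.card_fin], fun U' W' hrep' hirr' ↦ ?_⟩
  obtain ⟨b', hb'⟩ := hrep'.exists_isClockShiftBasis hω hirr'
  exact hb.exists_linearEquiv hb'
end
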